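/- arXiv:2511.02377 — 4 statements merged into one kernel-verified Lean document; each statement's English description precedes it below -/
import Mathlib

section
/- Let (Ω, μ) be a probability space and (A_n) measurable sets with ∑_{n=1}^∞ μ(A_n) = ∞. Suppose there is a constant C ≥ 1 such that ∑_{s,t=1}^Q μ(A_s ∩ A_t) ≤ C (∑_{s=1}^Q μ(A_s))² for infinitely many Q ∈ ℕ. Then μ(limsup A_n) ≥ C⁻¹. -/
set_option maxHeartbeats 1000000


open MeasureTheory Filter Set
open scoped ENNReal NNReal Topology

private lemma cs_aux {Ω : Type*} [MeasurableSpace Ω] (μ : Measure Ω) (f : Ω → ℝ≥0∞)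
    (hf : Measurable f) (E : Set Ω) (hE : MeasurableSet E)
    (hsupp : ∀ ω, ω ∉ E → f ω = 0) :
    (∫⁻ ω, f ω ∂μ) ^ 2 ≤ (∫⁻ ω, f ω ^ 2 ∂μ) * μ E := by
  have hpq : Real.HolderConjugate 2 2 := by constructor <;> norm_num
  have key := ENNReal.lintegral_mul_le_Lp_mul_Lq μ hpq hf.aemeasurable
    ((measurable_one.indicator hE).aemeasurable)
  simp only [Pi.mul_apply] at key
  have hfg : ∫⁻ a, f a * E.indicator 1 a ∂μ = ∫⁻ ω, f ω ∂μ := by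
    congr 1; funext ω
    by_cases h : ω ∈ E
    · simp [Set.indicator_of_mem h]
    · simp [Set.indicator_of_notMem h, hsupp ω h]
  have h1 : ∫⁻ a, E.indicator (1 : Ω → ℝ≥0∞) a ^ (2:ℝ) ∂μ = μ E := by
    rw [← lintegral_indicator_one hE]
    congr 1; funext ω; by_cases h : ω ∈ E <;> simp [h]
  have h2 : ∫⁻ a, f a ^ (2:ℝ) ∂μ = ∫⁻ ω, f ω ^ 2 ∂μ := by
    congr 1; funext ω; rw [← ENNReal.rpow_natCast (f ω) 2]; norm_num
  rw [hfg, h1, h2] at key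
  calc (∫⁻ ω, f ω ∂μ)^2 ≤ ((∫⁻ ω, f ω ^ 2 ∂μ) ^ (1/(2:ℝ)) * μ E ^ (1/(2:ℝ)))^2 := by
        rw [sq, sq]; exact mul_le_mul' key key
    _ = (∫⁻ ω, f ω ^ 2 ∂μ) * μ E := by
        rw [mul_pow, ← ENNReal.rpow_natCast (_ ^ (1/(2:ℝ))) 2,
          ← ENNReal.rpow_natCast ((μ E) ^ (1/(2:ℝ))) 2,
          ← ENNReal.rpow_mul, ← ENNReal.rpow_mul]
        norm_num

private lemma lint_sum {Ω : Type*} [MeasurableSpace Ω] (μ : Measure Ω) (A : ℕ → Set Ω)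
    (hA : ∀ n, MeasurableSet (A n)) (F : Finset ℕ) :
    ∫⁻ ω, (∑ n ∈ F, (A n).indicator 1 ω) ∂μ = ∑ n ∈ F, μ (A n) := by
  rw [lintegral_finset_sum _ (fun n _ => (measurable_one.indicator (hA n)))]
  simp_rw [lintegral_indicator_one (hA _)]

private lemma lint_sq {Ω : Type*} [MeasurableSpace Ω] (μ : Measure Ω) (A : ℕ → Set Ω)
    (hA : ∀ n, MeasurableSet (A n)) (F : Finset ℕ) :
    ∫⁻ ω, (∑ n ∈ F, (A n).indicator 1 ω) ^ 2 ∂μ = ∑ s ∈ F, ∑ u ∈ F, μ (A s ∩ A u) := by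
  have : ∀ ω, (∑ n ∈ F, (A n).indicator (1 : Ω → ℝ≥0∞) ω) ^ 2
      = ∑ s ∈ F, ∑ u ∈ F, (A s ∩ A u).indicator 1 ω := by
    intro ω
    rw [sq, Finset.sum_mul_sum]
    refine Finset.sum_congr rfl fun s _ => Finset.sum_congr rfl fun u _ => ?_
    by_cases hs : ω ∈ A s <;> by_cases hu : ω ∈ A u <;>
      simp [Set.indicator_apply, hs, hu]
  simp_rw [this]
  rw [lintegral_finset_sum _ (fun s _ => Finset.measurable_sum _
    (fun u _ => measurable_one.indicator ((hA s).inter (hA u))))]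
  refine Finset.sum_congr rfl fun s _ => ?_
  rw [lintegral_finset_sum _ (fun u _ => measurable_one.indicator ((hA s).inter (hA u)))]
  simp_rw [lintegral_indicator_one ((hA _).inter (hA _))]

/-- Divergence Borel–Cantelli lemma with quasi-independence on average. -/
theorem stmt_1 {Ω : Type*} [MeasurableSpace Ω] (μ : Measure Ω) [IsProbabilityMeasure μ]
    (A : ℕ → Set Ω) (hA : ∀ n, MeasurableSet (A n))
    (hdiv : ∑' n, μ (A n) = ⊤)
    (C : ℝ≥0∞) (hC : 1 ≤ C) (hCtop : C ≠ ⊤)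
    (hquasi : ∀ N : ℕ, ∃ Q ≥ N,
      ∑ s ∈ Finset.Icc 1 Q, ∑ t ∈ Finset.Icc 1 Q, μ (A s ∩ A t) ≤
        C * (∑ s ∈ Finset.Icc 1 Q, μ (A s)) ^ 2) :
    C⁻¹ ≤ μ (⋂ t : ℕ, ⋃ n, ⋃ (_ : t ≤ n), A n) := by
  -- notation
  set S : ℕ → ℝ≥0∞ := fun Q => ∑ s ∈ Finset.Icc 1 Q, μ (A s) with hS
  have hSmono : Monotone S := fun a b hab =>
    Finset.sum_le_sum_of_subset (Finset.Icc_subset_Icc_right hab)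
  have hSne : ∀ Q, S Q ≠ ⊤ := fun Q =>
    ENNReal.sum_ne_top.mpr fun a _ => measure_ne_top μ _
  -- partial sums tend to ⊤
  have hSsup : ∀ c : ℝ≥0∞, c ≠ ⊤ → ∃ N, c ≤ S N := by
    intro c hc
    have h1 : (∑' n : ℕ, μ (A (1 + n))) = ⊤ := by
      rw [tsum_eq_zero_add' ENNReal.summable] at hdiv
      simp_rw [add_comm 1]
      exact (ENNReal.add_eq_top.mp hdiv).resolve_left (measure_ne_top μ _)
    have h2 : (⨆ n, ∑ i ∈ Finset.range n, μ (A (1 + i))) = ⊤ := by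
      rw [← ENNReal.tsum_eq_iSup_nat, h1]
    have h3 : ∃ N, c < ∑ i ∈ Finset.range N, μ (A (1 + i)) := by
      rw [← lt_iSup_iff, h2]; exact hc.lt_top
    obtain ⟨N, hN⟩ := h3
    refine ⟨N, hN.le.trans ?_⟩
    show ∑ i ∈ Finset.range N, μ (A (1 + i)) ≤ ∑ s ∈ Finset.Icc 1 N, μ (A s)
    rw [← Finset.Ico_add_one_right_eq_Icc, Finset.sum_Ico_eq_sum_range]
    simp
  -- key: for every t ≥ 1, C⁻¹ ≤ μ (⋃ n ≥ t, A n)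
  have key : ∀ t : ℕ, 1 ≤ t → C⁻¹ ≤ μ (⋃ n, ⋃ (_ : t ≤ n), A n) := by
    intro t ht
    set m := μ (⋃ n, ⋃ (_ : t ≤ n), A n) with hm
    refine ENNReal.le_of_forall_pos_le_add fun ε hε hmlt => ?_
    set η : ℝ≥0 := min (ε / 2) (1 / 2) with hη
    have hη0 : (0:ℝ≥0) < η := lt_min (by positivity) (by norm_num)
    have hη1 : η ≤ 1 := (min_le_right _ _).trans (by norm_num)
    have h2η : 2 * η ≤ ε := by
      calc 2 * η ≤ 2 * (ε / 2) := by
            exact mul_le_mul_right (min_le_left _ _) 2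
        _ = ε := by rw [mul_comm]; exact div_mul_cancel₀ ε two_ne_zero
    suffices hmain : ((1 - η : ℝ≥0) : ℝ≥0∞) ^ 2 * C⁻¹ ≤ m by
      have hCinv1 : C⁻¹ ≤ 1 := by
        rw [ENNReal.inv_le_one]; exact hC
      calc C⁻¹ = 1 * C⁻¹ := (one_mul _).symm
        _ ≤ (((1 - η : ℝ≥0) : ℝ≥0∞) ^ 2 + 2 * η) * C⁻¹ := by
            refine mul_le_mul_left ?_ _
            have : (1 : ℝ≥0) ≤ (1 - η) ^ 2 + 2 * η := by
              rw [← NNReal.coe_le_coe]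
              push_cast [NNReal.coe_sub hη1]
              nlinarith [sq_nonneg (η : ℝ)]
            calc (1 : ℝ≥0∞) = ((1 : ℝ≥0) : ℝ≥0∞) := by simp
              _ ≤ (((1 - η)^2 + 2 * η : ℝ≥0) : ℝ≥0∞) := by
                  exact_mod_cast this
              _ = ((1 - η : ℝ≥0) : ℝ≥0∞) ^ 2 + 2 * η := by
                  push_cast; ring
        _ = ((1 - η : ℝ≥0) : ℝ≥0∞) ^ 2 * C⁻¹ + 2 * η * C⁻¹ := by ring
        _ ≤ m + ε := by
            refine add_le_add hmain ?_
            calc (2 * η : ℝ≥0∞) * C⁻¹ ≤ 2 * η * 1 := mul_le_mul_right hCinv1 _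
              _ = ((2 * η : ℝ≥0) : ℝ≥0∞) := by push_cast; ring
              _ ≤ (ε : ℝ≥0∞) := by exact_mod_cast h2η
    -- head sum
    set H : ℝ≥0∞ := ∑ s ∈ Finset.Icc 1 (t - 1), μ (A s) with hH
    have hHne : H ≠ ⊤ := hSne (t - 1)
    -- choose N large
    obtain ⟨N₀, hN₀⟩ := hSsup (H * (η : ℝ≥0∞)⁻¹ + 1) (by
      refine ENNReal.add_ne_top.mpr ⟨?_, ENNReal.one_ne_top⟩
      exact ENNReal.mul_ne_top hHne (ENNReal.inv_ne_top.mpr (by exact_mod_cast hη0.ne')))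
    obtain ⟨Q, hQN, hQuasi⟩ := hquasi (max N₀ t)
    have hQt : t ≤ Q := le_trans (le_max_right _ _) hQN
    have hSQ : H * (η : ℝ≥0∞)⁻¹ + 1 ≤ S Q :=
      hN₀.trans (hSmono (le_trans (le_max_left _ _) hQN))
    have hSQ0 : S Q ≠ 0 := by
      intro h0; rw [h0] at hSQ
      exact absurd (le_trans (le_add_self) hSQ) (by simp)
    have hSQtop : S Q ≠ ⊤ := hSne Q
    -- H ≤ η * S Q
    have hHη : H ≤ (η : ℝ≥0∞) * S Q := by
      have h1 : H * (η : ℝ≥0∞)⁻¹ ≤ S Q := le_trans le_self_add hSQ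
      calc H = H * (η : ℝ≥0∞)⁻¹ * η := by
            rw [mul_assoc, ENNReal.inv_mul_cancel (by exact_mod_cast hη0.ne')
              (by exact ENNReal.coe_ne_top), mul_one]
        _ ≤ S Q * η := mul_le_mul_left h1 _
        _ = (η : ℝ≥0∞) * S Q := mul_comm _ _
    -- tail sum T
    set T : ℝ≥0∞ := ∑ s ∈ Finset.Icc t Q, μ (A s) with hT
    have hdisj : Disjoint (Finset.Icc 1 (t - 1)) (Finset.Icc t Q) := by
      rw [Finset.disjoint_left]
      intro a ha hb
      simp only [Finset.mem_Icc] at ha hb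
      omega
    have hunion : Finset.Icc 1 (t - 1) ∪ Finset.Icc t Q = Finset.Icc 1 Q := by
      ext x
      simp only [Finset.mem_union, Finset.mem_Icc]
      omega
    have hsplit : S Q = H + T := by
      show ∑ s ∈ Finset.Icc 1 Q, μ (A s) = H + T
      rw [hH, hT, ← Finset.sum_union hdisj, hunion]
    -- T ≥ (1-η) S Q
    have hTlb : ((1 - η : ℝ≥0) : ℝ≥0∞) * S Q ≤ T := by
      have hηtop : (η : ℝ≥0∞) * S Q ≠ ⊤ := ENNReal.mul_ne_top ENNReal.coe_ne_top hSQtop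
      rw [← ENNReal.add_le_add_iff_right hηtop]
      calc ((1 - η : ℝ≥0) : ℝ≥0∞) * S Q + (η : ℝ≥0∞) * S Q
          = (((1 - η) + η : ℝ≥0) : ℝ≥0∞) * S Q := by push_cast; ring
        _ = S Q := by rw [tsub_add_cancel_of_le hη1]; simp
        _ = H + T := hsplit
        _ ≤ (η : ℝ≥0∞) * S Q + T := add_le_add_left hHη _
        _ = T + (η : ℝ≥0∞) * S Q := add_comm _ _
    -- Cauchy-Schwarz
    set E : Set Ω := ⋃ n ∈ Finset.Icc t Q, A n with hE
    have hEmeas : MeasurableSet E := (Finset.Icc t Q).measurableSet_biUnion (fun n _ => hA n)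
    set f : Ω → ℝ≥0∞ := fun ω => ∑ n ∈ Finset.Icc t Q, (A n).indicator 1 ω with hf
    have hfmeas : Measurable f := Finset.measurable_sum _ (fun n _ => measurable_one.indicator (hA n))
    have hfsupp : ∀ ω, ω ∉ E → f ω = 0 := by
      intro ω hω
      refine Finset.sum_eq_zero fun n hn => ?_
      rw [Set.indicator_of_notMem]
      intro hmem
      exact hω (Set.mem_biUnion hn hmem)
    have hcs := cs_aux μ f hfmeas E hEmeas hfsupp
    rw [lint_sum μ A hA, lint_sq μ A hA] at hcs
    -- chain
    have hEm : μ E ≤ m := by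
      refine measure_mono ?_
      intro ω hω
      simp only [hE, Set.mem_iUnion] at hω ⊢
      obtain ⟨n, hn, hωn⟩ := hω
      exact ⟨n, (Finset.mem_Icc.mp hn).1, hωn⟩
    have hDle : ∑ s ∈ Finset.Icc t Q, ∑ u ∈ Finset.Icc t Q, μ (A s ∩ A u)
        ≤ C * S Q ^ 2 := by
      refine le_trans ?_ hQuasi
      refine Finset.sum_le_sum_of_subset_of_nonneg (Finset.Icc_subset_Icc_left ht) (by simp) |>.trans ?_
      exact Finset.sum_le_sum fun s _ =>
        Finset.sum_le_sum_of_subset_of_nonneg (Finset.Icc_subset_Icc_left ht) (by simp)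
    have hchain : (((1 - η : ℝ≥0) : ℝ≥0∞) ^ 2 * C⁻¹) * (C * S Q ^ 2)
        ≤ m * (C * S Q ^ 2) := by
      have hCm : C * S Q ^ 2 * m = m * (C * S Q ^ 2) := by ring
      calc (((1 - η : ℝ≥0) : ℝ≥0∞) ^ 2 * C⁻¹) * (C * S Q ^ 2)
          = ((1 - η : ℝ≥0) : ℝ≥0∞) ^ 2 * S Q ^ 2 * (C⁻¹ * C) := by ring
        _ = (((1 - η : ℝ≥0) : ℝ≥0∞) * S Q) ^ 2 := by
            rw [ENNReal.inv_mul_cancel (by positivity) hCtop, mul_one, mul_pow]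
        _ ≤ T ^ 2 := pow_le_pow_left' hTlb 2
        _ ≤ (∑ s ∈ Finset.Icc t Q, ∑ u ∈ Finset.Icc t Q, μ (A s ∩ A u)) * μ E := hcs
        _ ≤ (C * S Q ^ 2) * m := mul_le_mul' hDle hEm
        _ = m * (C * S Q ^ 2) := by ring
    have hCS2ne0 : C * S Q ^ 2 ≠ 0 := by
      refine mul_ne_zero (by positivity) (pow_ne_zero _ hSQ0)
    have hCS2top : C * S Q ^ 2 ≠ ⊤ := ENNReal.mul_ne_top hCtop (by
      exact ENNReal.pow_ne_top hSQtop)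
    have := (ENNReal.mul_le_mul_iff_left hCS2ne0 hCS2top).mp hchain
    exact this
  -- conclude
  have hanti : ∀ a b : ℕ, a ≤ b → (⋃ n, ⋃ (_ : b ≤ n), A n) ⊆ ⋃ n, ⋃ (_ : a ≤ n), A n := by
    intro a b hab ω hω
    simp only [Set.mem_iUnion] at hω ⊢
    obtain ⟨n, hn, hωn⟩ := hω
    exact ⟨n, hab.trans hn, hωn⟩
  have hmeas : ∀ t : ℕ, MeasurableSet (⋃ n, ⋃ (_ : t ≤ n), A n) :=
    fun t => MeasurableSet.iUnion fun n => MeasurableSet.iUnion fun _ => hA n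
  rw [Directed.measure_iInter (fun t => (hmeas t).nullMeasurableSet)
    (fun a b => ⟨max a b, hanti a _ (le_max_left _ _), hanti b _ (le_max_right _ _)⟩)
    ⟨0, measure_ne_top μ _⟩]
  refine le_iInf fun t => ?_
  refine le_trans (key (max t 1) (le_max_right _ _)) ?_
  exact measure_mono (hanti t _ (le_max_left _ _))
end

section
/- Let (Ω, μ) be a probability space and (A_n) be pairwise independent measurable sets, i.e. μ(A_s ∩ A_t) = μ(A_s)μ(A_t) for all s ≠ t, with ∑_{n=1}^∞ μ(A_n) = ∞. Then for μ-almost all x, the counting function A(x,N) := #{1 ≤ n ≤ N : x ∈ A_n} satisfies A(x,N)/∑_{n=1}^N μ(A_n) → 1 as N → ∞. -/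
open MeasureTheory Filter Set
open scoped ENNReal Topology

lemma bc2_sum_range (M : Type*) [AddCommMonoid M] (g : ℕ → M) (n : ℕ) :
    ∑ i ∈ Finset.range (n + 1), g i = g 0 + ∑ i ∈ Finset.Icc 1 n, g i := by
  induction n with
  | zero => simp
  | succ n ih =>
      rw [Finset.sum_range_succ, ih, Finset.sum_Icc_succ_top (by omega), add_assoc]

lemma bc2_var_le {Ω : Type*} [MeasurableSpace Ω] (μ : Measure Ω) [IsProbabilityMeasure μ]
    (A : ℕ → Set Ω) (hA : ∀ n, MeasurableSet (A n))
    (hind : ∀ s t, s ≠ t → μ (A s ∩ A t) = μ (A s) * μ (A t)) (I : Finset ℕ) :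
    ∫ x, ((∑ n ∈ I, (A n).indicator (fun _ => (1 : ℝ)) x) - ∑ n ∈ I, (μ (A n)).toReal)^2 ∂μ
      ≤ ∑ n ∈ I, (μ (A n)).toReal := by
  set f : ℕ → Ω → ℝ := fun n => (A n).indicator fun _ => 1 with hf
  set p : ℕ → ℝ := fun n => (μ (A n)).toReal with hp
  have hmulrep : ∀ n m, (fun x => f n x * f m x) = (A n ∩ A m).indicator (fun _ => (1:ℝ)) := by
    intro n m; funext x
    by_cases hx : x ∈ A n <;> by_cases hy : x ∈ A m <;>
      simp [hf, Set.indicator, hx, hy]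
  have hfint : ∀ n m : ℕ, Integrable (fun x => f n x * f m x) μ := by
    intro n m; rw [hmulrep]
    exact (integrable_const 1).indicator ((hA n).inter (hA m))
  have hint_f : ∀ n, Integrable (f n) μ := fun n => (integrable_const 1).indicator (hA n)
  have hintegral_f : ∀ n, ∫ x, f n x ∂μ = p n := by
    intro n; rw [hf]; rw [integral_indicator_const (1:ℝ) (hA n)]; simp [hp, Measure.real]
  have hmul : ∀ n m, ∫ x, f n x * f m x ∂μ = (μ (A n ∩ A m)).toReal := by
    intro n m; rw [hmulrep, integral_indicator_const (1:ℝ) ((hA n).inter (hA m))]; simp [Measure.real]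
  set S : Ω → ℝ := fun x => ∑ n ∈ I, f n x with hS
  set Mv : ℝ := ∑ n ∈ I, p n with hMv
  have hSint : Integrable S μ := integrable_finset_sum I fun n _ => hint_f n
  have hSsq : (fun x => (S x)^2) = fun x => ∑ n ∈ I, ∑ m ∈ I, f n x * f m x := by
    funext x; rw [sq, hS, Finset.sum_mul_sum]
  have hS2int : Integrable (fun x => (S x)^2) μ := by
    rw [hSsq]
    exact integrable_finset_sum I fun n _ => integrable_finset_sum I fun m _ => hfint n m
  have hintS : ∫ x, S x ∂μ = Mv := by
    rw [hS, integral_finset_sum I fun n _ => hint_f n]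
    exact Finset.sum_congr rfl fun n _ => hintegral_f n
  have hintS2 : ∫ x, (S x)^2 ∂μ = ∑ n ∈ I, ∑ m ∈ I, (μ (A n ∩ A m)).toReal := by
    rw [hSsq, integral_finset_sum I fun n _ => integrable_finset_sum I fun m _ => hfint n m]
    refine Finset.sum_congr rfl fun n _ => ?_
    rw [integral_finset_sum I fun m _ => hfint n m]
    exact Finset.sum_congr rfl fun m _ => hmul n m
  have diag : ∀ n ∈ I, ∑ m ∈ I, ((μ (A n ∩ A m)).toReal - p n * p m) = p n - p n * p n := by
    intro n hn
    rw [Finset.sum_eq_single n]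
    · simp [hp]
    · intro m hm hne
      rw [hind n m (Ne.symm hne), ENNReal.toReal_mul, sub_self]
    · intro h; exact absurd hn h
  have key : ∑ n ∈ I, ∑ m ∈ I, (μ (A n ∩ A m)).toReal
      = Mv^2 + ∑ n ∈ I, (p n - p n * p n) := by
    have h1 : ∀ n ∈ I, ∑ m ∈ I, (μ (A n ∩ A m)).toReal
        = ∑ m ∈ I, p n * p m + (p n - p n * p n) := by
      intro n hn
      have := diag n hn
      rw [Finset.sum_sub_distrib] at this
      linarith [this]
    rw [Finset.sum_congr rfl h1, Finset.sum_add_distrib, hMv, sq, Finset.sum_mul_sum]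
  have hvar : ∫ x, (S x - Mv)^2 ∂μ = ∑ n ∈ I, (p n - p n * p n) := by
    have hexp : (fun x => (S x - Mv)^2) = fun x => (S x)^2 - (2*Mv) * S x + Mv^2 := by
      funext x; ring
    rw [hexp]
    have i1 : Integrable (fun x => S x ^ 2 - 2 * Mv * S x) μ := hS2int.sub (hSint.const_mul _)
    rw [integral_add i1 (integrable_const _), integral_sub hS2int (hSint.const_mul _),
      MeasureTheory.integral_const_mul, hintS, hintS2, key, integral_const]
    simp only [Measure.real, measure_univ, ENNReal.toReal_one, smul_eq_mul, one_mul]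
    ring
  calc ∫ x, (S x - Mv)^2 ∂μ = ∑ n ∈ I, (p n - p n * p n) := hvar
    _ ≤ ∑ n ∈ I, p n := by
        refine Finset.sum_le_sum fun n _ => ?_
        nlinarith [ENNReal.toReal_nonneg (a := μ (A n))]

lemma bc2_tendsto_atTop {Ω : Type*} [MeasurableSpace Ω] (μ : Measure Ω) [IsProbabilityMeasure μ]
    (A : ℕ → Set Ω) (hdiv : ∑' n, μ (A n) = ⊤) :
    Tendsto (fun N : ℕ => ∑ n ∈ Finset.Icc 1 N, (μ (A n)).toReal) atTop atTop := by
  set M : ℕ → ℝ := fun N => ∑ n ∈ Finset.Icc 1 N, (μ (A n)).toReal with hM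
  have hmono : Monotone M := by
    intro a b hab
    exact Finset.sum_le_sum_of_subset_of_nonneg (Finset.Icc_subset_Icc_right hab)
      (fun i _ _ => ENNReal.toReal_nonneg)
  refine tendsto_atTop_atTop_of_monotone' hmono ?_
  rintro ⟨C, hC⟩
  have hfin : ∀ n, μ (A n) ≠ ⊤ := fun n => (measure_lt_top μ _).ne
  have hMC : ∀ N, M N ≤ C := fun N => hC ⟨N, rfl⟩
  have hsum : ∀ N, ∑ n ∈ Finset.Icc 1 N, μ (A n) ≤ ENNReal.ofReal C := by
    intro N
    rw [ENNReal.le_ofReal_iff_toReal_le (by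
      exact (ENNReal.sum_lt_top.mpr fun n _ => (hfin n).lt_top).ne)
      (le_trans (by positivity) (hMC N))]
    rw [ENNReal.toReal_sum fun n _ => hfin n]
    exact hMC N
  have hrange : ∀ n, ∑ i ∈ Finset.range n, μ (A i) ≤ 1 + ENNReal.ofReal C := by
    intro n
    cases n with
    | zero => simp
    | succ m =>
        rw [bc2_sum_range]
        exact add_le_add prob_le_one (hsum m)
  have hle : ∑' n, μ (A n) ≤ 1 + ENNReal.ofReal C := by
    rw [ENNReal.tsum_eq_iSup_nat]
    exact iSup_le hrange
  rw [hdiv, top_le_iff] at hle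
  exact (ENNReal.add_lt_top.mpr ⟨ENNReal.one_lt_top, ENNReal.ofReal_lt_top⟩).ne hle

/-- Second Borel–Cantelli lemma, quantitative form: pairwise independence gives the
asymptotics of the counting function. -/
theorem stmt_2 {Ω : Type*} [MeasurableSpace Ω] (μ : Measure Ω) [IsProbabilityMeasure μ]
    (A : ℕ → Set Ω) (hA : ∀ n, MeasurableSet (A n))
    (hind : ∀ s t, s ≠ t → μ (A s ∩ A t) = μ (A s) * μ (A t))
    (hdiv : ∑' n, μ (A n) = ⊤) :
    ∀ᵐ x ∂μ, Tendsto
      (fun N : ℕ =>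
        (∑ n ∈ Finset.Icc 1 N, (A n).indicator (fun _ => (1 : ℝ)) x) /
          ∑ n ∈ Finset.Icc 1 N, (μ (A n)).toReal)
      atTop (𝓝 1) := by
  classical
  set f : ℕ → Ω → ℝ := fun n => (A n).indicator fun _ => 1 with hf
  set p : ℕ → ℝ := fun n => (μ (A n)).toReal with hp
  set S : ℕ → Ω → ℝ := fun N x => ∑ n ∈ Finset.Icc 1 N, f n x with hS
  set M : ℕ → ℝ := fun N => ∑ n ∈ Finset.Icc 1 N, p n with hM
  -- basic facts
  have hf01 : ∀ n x, 0 ≤ f n x ∧ f n x ≤ 1 := by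
    intro n x; constructor <;> · by_cases hx : x ∈ A n <;> simp [hf, hx]
  have hSnonneg : ∀ N x, 0 ≤ S N x :=
    fun N x => Finset.sum_nonneg fun n _ => (hf01 n x).1
  have hSle : ∀ N x, S N x ≤ N := by
    intro N x
    calc S N x ≤ ∑ n ∈ Finset.Icc 1 N, (1:ℝ) :=
          Finset.sum_le_sum fun n _ => (hf01 n x).2
      _ = N := by simp
  have hSmono : ∀ x, Monotone (fun N => S N x) := by
    intro x a b hab
    exact Finset.sum_le_sum_of_subset_of_nonneg (Finset.Icc_subset_Icc_right hab)
      (fun n _ _ => (hf01 n x).1)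
  have hSmeas : ∀ N, Measurable (S N) :=
    fun N => Finset.measurable_sum _ fun n _ => (measurable_const.indicator (hA n))
  have hp01 : ∀ n, 0 ≤ p n ∧ p n ≤ 1 := by
    intro n
    refine ⟨ENNReal.toReal_nonneg, ?_⟩
    have := prob_le_one (μ := μ) (s := A n)
    calc p n ≤ (1:ℝ≥0∞).toReal := ENNReal.toReal_mono (by simp) this
      _ = 1 := by simp
  have hMmono : Monotone M := by
    intro a b hab
    exact Finset.sum_le_sum_of_subset_of_nonneg (Finset.Icc_subset_Icc_right hab)
      (fun n _ _ => (hp01 n).1)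
  have hMdiv : Tendsto M atTop atTop := bc2_tendsto_atTop μ A hdiv
  -- the subsequence
  have hex : ∀ k : ℕ, ∃ N, ((k:ℝ)+1)^2 ≤ M N := fun k =>
    (hMdiv.eventually_ge_atTop (((k:ℝ)+1)^2)).exists
  set Nk : ℕ → ℕ := fun k => Nat.find (hex k) with hNkdef
  have hNk_spec : ∀ k : ℕ, ((k:ℝ)+1)^2 ≤ M (Nk k) := fun k => Nat.find_spec (hex k)
  have hMk_pos : ∀ k, 0 < M (Nk k) := fun k => lt_of_lt_of_le (by positivity) (hNk_spec k)
  have hNk_pos : ∀ k, 1 ≤ Nk k := by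
    intro k
    by_contra h
    have h0 : Nk k = 0 := by omega
    have := hNk_spec k
    rw [h0] at this
    have hM0 : M 0 = 0 := by simp [hM]
    have hk : (0:ℝ) ≤ k := Nat.cast_nonneg k
    nlinarith [this, hM0]
  have hNk_ub : ∀ k : ℕ, M (Nk k) ≤ ((k:ℝ)+1)^2 + 1 := by
    intro k
    have hpos := hNk_pos k
    obtain ⟨m, hm⟩ : ∃ m, Nk k = m + 1 := ⟨Nk k - 1, by omega⟩
    have h2 : ¬ ((k:ℝ)+1)^2 ≤ M m := Nat.find_min (hex k) (show m < Nk k by omega)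
    push_neg at h2
    have h3 : M (m+1) = M m + p (m+1) := by
      rw [hM]; exact Finset.sum_Icc_succ_top (by omega) p
    rw [hm, h3]
    have := (hp01 (m+1)).2
    linarith
  have hNk_lt : ∀ k, Nk k < Nk (k+1) := by
    intro k
    by_contra h
    push_neg at h
    have h1 : M (Nk (k+1)) ≤ M (Nk k) := hMmono h
    have h2 := hNk_spec (k+1)
    have h3 := hNk_ub k
    push_cast at h2
    nlinarith [Nat.cast_nonneg (α := ℝ) k]
  have hNkSM : StrictMono Nk := strictMono_nat_of_lt_succ hNk_lt
  -- the squared deviations along the subsequence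
  set g : ℕ → Ω → ℝ := fun k x => (S (Nk k) x / M (Nk k) - 1)^2 with hg
  have hgmeas : ∀ k, Measurable (g k) := by
    intro k
    exact (((hSmeas (Nk k)).div_const _).sub measurable_const).pow_const 2
  have hgrep : ∀ k x, g k x = (1 / M (Nk k))^2 * (S (Nk k) x - M (Nk k))^2 := by
    intro k x
    have hb : M (Nk k) ≠ 0 := (hMk_pos k).ne'
    rw [hg]
    field_simp
  have hgint : ∀ k, Integrable (g k) μ := by
    intro k
    have h1 : Integrable (fun x => (S (Nk k) x - M (Nk k))^2) μ := by
      refine (integrable_const (((Nk k : ℝ) + M (Nk k))^2)).mono'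
        (((hSmeas (Nk k)).sub measurable_const).pow_const 2).aestronglyMeasurable
        (ae_of_all _ fun x => ?_)
      have h1 := hSnonneg (Nk k) x
      have h2 := hSle (Nk k) x
      have h3 := (hMk_pos k).le
      rw [Real.norm_eq_abs, abs_of_nonneg (sq_nonneg _)]
      nlinarith
    have : g k = fun x => (1 / M (Nk k))^2 * (S (Nk k) x - M (Nk k))^2 := funext (hgrep k)
    rw [this]
    exact h1.const_mul _
  have hgle : ∀ k, ∫ x, g k x ∂μ ≤ 1/((k:ℝ)+1)^2 := by
    intro k
    have hb : M (Nk k) ≠ 0 := (hMk_pos k).ne'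
    have h0 : ∫ x, g k x ∂μ = (1 / M (Nk k))^2 * ∫ x, (S (Nk k) x - M (Nk k))^2 ∂μ := by
      rw [show (fun x => g k x) = fun x => (1 / M (Nk k))^2 * (S (Nk k) x - M (Nk k))^2
        from funext (hgrep k)]
      exact MeasureTheory.integral_const_mul _ _
    have hvar := bc2_var_le μ A hA hind (Finset.Icc 1 (Nk k))
    have h1 : ∫ x, (S (Nk k) x - M (Nk k))^2 ∂μ ≤ M (Nk k) := hvar
    calc ∫ x, g k x ∂μ = (1 / M (Nk k))^2 * ∫ x, (S (Nk k) x - M (Nk k))^2 ∂μ := h0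
      _ ≤ (1 / M (Nk k))^2 * M (Nk k) := by
          exact mul_le_mul_of_nonneg_left h1 (by positivity)
      _ = 1 / M (Nk k) := by field_simp
      _ ≤ 1/((k:ℝ)+1)^2 := one_div_le_one_div_of_le (by positivity) (hNk_spec k)
  -- summability
  have hsummable : Summable (fun k : ℕ => 1/((k:ℝ)+1)^2) := by
    have h0 : Summable (fun n : ℕ => 1/(n:ℝ)^2) :=
      Real.summable_one_div_nat_pow.mpr (by norm_num)
    have h1 := (summable_nat_add_iff (f := fun n : ℕ => 1/(n:ℝ)^2) 1).mpr h0
    refine h1.congr fun k => ?_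
    push_cast
    ring
  have hgnonneg : ∀ k x, 0 ≤ g k x := fun k x => sq_nonneg _
  have hlim_eq : ∀ k, ∫⁻ x, ENNReal.ofReal (g k x) ∂μ = ENNReal.ofReal (∫ x, g k x ∂μ) :=
    fun k => (ofReal_integral_eq_lintegral_ofReal (hgint k)
      (ae_of_all _ fun x => hgnonneg k x)).symm
  have h2 : ∫⁻ x, ∑' k, ENNReal.ofReal (g k x) ∂μ ≠ ⊤ := by
    rw [lintegral_tsum fun k => ((hgmeas k).ennreal_ofReal).aemeasurable]
    have hle : ∑' k, ∫⁻ x, ENNReal.ofReal (g k x) ∂μ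
        ≤ ∑' k : ℕ, ENNReal.ofReal (1/((k:ℝ)+1)^2) := by
      refine ENNReal.tsum_le_tsum fun k => ?_
      rw [hlim_eq k]
      exact ENNReal.ofReal_le_ofReal (hgle k)
    refine ne_top_of_le_ne_top ?_ hle
    rw [← ENNReal.ofReal_tsum_of_nonneg (fun k => by positivity) hsummable]
    exact ENNReal.ofReal_ne_top
  have hae := ae_lt_top (Measurable.ennreal_tsum fun k => (hgmeas k).ennreal_ofReal) h2
  -- conclusion
  filter_upwards [hae] with x hx
  have htz : Tendsto (fun k => g k x) atTop (𝓝 0) := by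
    have h0 := ENNReal.tendsto_atTop_zero_of_tsum_ne_top hx.ne
    have h1 := (ENNReal.tendsto_toReal (a := 0) (by simp)).comp h0
    have h3 : ∀ k, (ENNReal.ofReal (g k x)).toReal = g k x :=
      fun k => ENNReal.toReal_ofReal (hgnonneg k x)
    simpa only [Function.comp_def, h3, ENNReal.toReal_zero] using h1
  have hratio : Tendsto (fun k => S (Nk k) x / M (Nk k)) atTop (𝓝 1) := by
    have habs : Tendsto (fun k => |S (Nk k) x / M (Nk k) - 1|) atTop (𝓝 0) := by
      have h1 := (Real.continuous_sqrt.tendsto 0).comp htz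
      simp only [Function.comp_def, hg, Real.sqrt_sq_eq_abs, Real.sqrt_zero] at h1
      exact h1
    have h2 : Tendsto (fun k => S (Nk k) x / M (Nk k) - 1) atTop (𝓝 0) :=
      (tendsto_zero_iff_abs_tendsto_zero _).mpr habs
    have h3 := h2.add (tendsto_const_nhds (x := (1:ℝ)))
    simpa using h3
  -- ratio of consecutive M values tends to 1
  have hq : Tendsto (fun k => M (Nk k) / M (Nk (k+1))) atTop (𝓝 1) := by
    have hub : ∀ k, M (Nk k) / M (Nk (k+1)) ≤ 1 := fun k =>
      div_le_one_of_le₀ (hMmono (hNk_lt k).le) (hMk_pos (k+1)).le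
    have hlb : ∀ k : ℕ, ((k:ℝ)+1)^2/(((k:ℝ)+2)^2+1) ≤ M (Nk k) / M (Nk (k+1)) := by
      intro k
      have h1 := hNk_spec k
      have h2 := hNk_ub (k+1)
      push_cast at h2
      refine div_le_div₀ (hMk_pos k).le h1 (hMk_pos (k+1)) ?_
      calc M (Nk (k+1)) ≤ ((k:ℝ)+1+1)^2 + 1 := h2
        _ = ((k:ℝ)+2)^2+1 := by ring
    have hL : Tendsto (fun k : ℕ => ((k:ℝ)+1)^2/(((k:ℝ)+2)^2+1)) atTop (𝓝 1) := by
      have hd : ∀ k : ℕ, (((k:ℝ)+2)^2+1) ≠ 0 := fun k => by positivity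
      have heq : ∀ k : ℕ, ((k:ℝ)+1)^2/(((k:ℝ)+2)^2+1)
          = 1 - (2*(k:ℝ)+4)/(((k:ℝ)+2)^2+1) := by
        intro k
        field_simp
        ring
      have hz : Tendsto (fun k : ℕ => (2*(k:ℝ)+4)/(((k:ℝ)+2)^2+1)) atTop (𝓝 0) := by
        refine squeeze_zero (g := fun k : ℕ => 2/((k:ℝ)+2)) (fun k => by positivity) (fun k => ?_) ?_
        · show (2*(k:ℝ)+4)/(((k:ℝ)+2)^2+1) ≤ 2/((k:ℝ)+2)
          rw [div_le_div_iff₀ (by positivity) (by positivity)]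
          nlinarith [Nat.cast_nonneg (α := ℝ) k]
        · have h4 := (tendsto_const_div_atTop_nhds_zero_nat (2:ℝ)).comp (tendsto_add_atTop_nat 2)
          refine h4.congr fun k => ?_
          simp only [Function.comp_def]
          push_cast
          ring
      have := (tendsto_const_nhds (x := (1:ℝ))).sub hz
      rw [sub_zero] at this
      refine this.congr fun k => (heq k).symm
    refine tendsto_of_tendsto_of_tendsto_of_le_of_le hL tendsto_const_nhds hlb hub
  have hqinv : Tendsto (fun k => M (Nk (k+1)) / M (Nk k)) atTop (𝓝 1) := by
    have := hq.inv₀ one_ne_zero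
    simp only [inv_div, inv_one] at this
    exact this
  -- upper and lower comparison sequences
  set lower : ℕ → ℝ := fun k => S (Nk k) x / M (Nk (k+1)) with hlower
  set upper : ℕ → ℝ := fun k => S (Nk (k+1)) x / M (Nk k) with hupper
  have hlow_t : Tendsto lower atTop (𝓝 1) := by
    have h1 : ∀ k, lower k = (S (Nk k) x / M (Nk k)) * (M (Nk k) / M (Nk (k+1))) := by
      intro k
      rw [hlower]
      field_simp
      rw [mul_div_mul_right _ _ (hMk_pos k).ne']
    have h2 := hratio.mul hq
    rw [mul_one] at h2
    exact h2.congr fun k => (h1 k).symm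
  have hupp_t : Tendsto upper atTop (𝓝 1) := by
    have h1 : ∀ k, upper k = (S (Nk (k+1)) x / M (Nk (k+1))) * (M (Nk (k+1)) / M (Nk k)) := by
      intro k
      rw [hupper]
      field_simp
      rw [mul_div_mul_right _ _ (hMk_pos (k+1)).ne']
    have h2 := (hratio.comp (tendsto_add_atTop_nat 1)).mul hqinv
    rw [mul_one] at h2
    exact h2.congr fun k => by rw [h1 k]; rfl
  -- the index function
  set r : ℕ → ℕ := fun N => Nat.findGreatest (fun k => Nk k ≤ N) N with hr
  have hr_le : ∀ N, Nk 0 ≤ N → Nk (r N) ≤ N := by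
    intro N hN
    exact Nat.findGreatest_spec (P := fun k => Nk k ≤ N) (m := 0) (Nat.zero_le N) hN
  have hr_lt : ∀ N, N < Nk (r N + 1) := by
    intro N
    by_cases hc : r N + 1 ≤ N
    · by_contra h
      push_neg at h
      exact Nat.findGreatest_is_greatest (lt_add_one _) hc h
    · push_neg at hc
      calc N < r N + 1 := hc
        _ ≤ Nk (r N + 1) := hNkSM.le_apply
  have hr_top : Tendsto r atTop atTop := by
    rw [tendsto_atTop_atTop]
    intro K
    refine ⟨max (Nk K) K, fun N hN => ?_⟩
    exact Nat.le_findGreatest (le_trans (le_max_right _ _) hN)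
      (le_trans (le_max_left _ _) hN)
  -- squeeze
  have hfinal : Tendsto (fun N => S N x / M N) atTop (𝓝 1) := by
    refine tendsto_of_tendsto_of_tendsto_of_le_of_le' (hlow_t.comp hr_top)
      (hupp_t.comp hr_top) ?_ ?_
    · filter_upwards [eventually_ge_atTop (Nk 0)] with N hN
      show lower (r N) ≤ S N x / M N
      have hMN_pos : 0 < M N := lt_of_lt_of_le (hMk_pos 0) (hMmono hN)
      refine div_le_div₀ (hSnonneg N x) (hSmono x (hr_le N hN)) hMN_pos ?_
      exact hMmono (hr_lt N).le
    · filter_upwards [eventually_ge_atTop (Nk 0)] with N hN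
      show S N x / M N ≤ upper (r N)
      have hMN_pos : 0 < M N := lt_of_lt_of_le (hMk_pos 0) (hMmono hN)
      refine div_le_div₀ (hSnonneg _ x) (hSmono x (hr_lt N).le) (hMk_pos (r N)) ?_
      exact hMmono (hr_le N hN)
  exact hfinal
end

section
/- Let (X, μ, T) be measure-preserving with T exponentially mixing with respect to μ, x₀ ∈ X, ψ : ℕ → ℝ_{≥0}, and W(T,ψ) := {x ∈ X : Tⁿx ∈ B(x₀, ψ(n)) for infinitely many n}. Then μ(W(T,ψ)) = 0 if ∑_{n=1}^∞ μ(B(x₀,ψ(n))) < ∞, and μ(W(T,ψ)) = 1 if the sum diverges. -/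
open MeasureTheory Filter Set Metric
open scoped ENNReal Topology

lemma aux_geom {γ : ℝ} (h0 : 0 ≤ γ) (h1 : γ < 1) (k : ℕ) :
    ∑ j ∈ Finset.range k, γ ^ j ≤ 1 / (1 - γ) := by
  have h : 0 < 1 - γ := by linarith
  rw [geom_sum_eq (ne_of_lt h1),
    show (γ ^ k - 1) / (γ - 1) = (1 - γ ^ k) / (1 - γ) by rw [← neg_div_neg_eq]; ring_nf,
    div_le_div_iff₀ h h]
  have : 0 ≤ γ ^ k := pow_nonneg h0 k
  nlinarith

lemma aux_PZ {X : Type*} [MeasurableSpace X] (μ : Measure X) [IsProbabilityMeasure μ]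
    (E : ℕ → Set X) (hE : ∀ n, MeasurableSet (E n)) (s : Finset ℕ) :
    (∑ n ∈ s, μ (E n)) ^ 2 ≤ μ (⋃ n ∈ s, E n) * ∑ j ∈ s, ∑ k ∈ s, μ (E j ∩ E k) := by
  set U : Set X := ⋃ n ∈ s, E n with hUdef
  have hU : MeasurableSet U := MeasurableSet.biUnion s.countable_toSet (fun n _ => hE n)
  set f : X → ℝ≥0∞ := fun x => ∑ n ∈ s, (E n).indicator 1 x with hfdef
  have hfm : ∀ n ∈ s, Measurable fun x => (E n).indicator (1 : X → ℝ≥0∞) x :=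
    fun n _ => measurable_one.indicator (hE n)
  have hf : Measurable f := Finset.measurable_sum s hfm
  have hg : Measurable (U.indicator (1 : X → ℝ≥0∞)) := measurable_one.indicator hU
  have hint1 : ∫⁻ x, f x ∂μ = ∑ n ∈ s, μ (E n) := by
    rw [lintegral_finset_sum s hfm]
    exact Finset.sum_congr rfl fun n _ => lintegral_indicator_one (hE n)
  have hint2 : ∫⁻ x, f x ^ (2 : ℝ) ∂μ = ∑ j ∈ s, ∑ k ∈ s, μ (E j ∩ E k) := by
    have hpt : ∀ x, f x ^ (2 : ℝ) =
        ∑ j ∈ s, ∑ k ∈ s, (E j ∩ E k).indicator (1 : X → ℝ≥0∞) x := by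
      intro x
      rw [show (2 : ℝ) = ((2 : ℕ) : ℝ) by norm_num, ENNReal.rpow_natCast, sq, hfdef,
        Finset.sum_mul_sum]
      refine Finset.sum_congr rfl fun j _ => Finset.sum_congr rfl fun k _ => ?_
      rw [Set.inter_indicator_one, Pi.mul_apply]
    rw [lintegral_congr hpt,
      lintegral_finset_sum s (fun j _ => Finset.measurable_sum s
        (fun k _ => measurable_one.indicator ((hE j).inter (hE k))))]
    refine Finset.sum_congr rfl fun j _ => ?_
    rw [lintegral_finset_sum s (fun k _ => measurable_one.indicator ((hE j).inter (hE k)))]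
    exact Finset.sum_congr rfl fun k _ => lintegral_indicator_one ((hE j).inter (hE k))
  have hint3 : ∫⁻ x, (U.indicator (1 : X → ℝ≥0∞) x) ^ (2 : ℝ) ∂μ = μ U := by
    have hpt : ∀ x, (U.indicator (1 : X → ℝ≥0∞) x) ^ (2 : ℝ) =
        U.indicator (1 : X → ℝ≥0∞) x := by
      intro x
      by_cases hx : x ∈ U <;>
        simp [hx, ENNReal.zero_rpow_of_pos (by norm_num : (0:ℝ) < 2)]
    rw [lintegral_congr hpt, lintegral_indicator_one hU]
  have hconj : Real.HolderConjugate 2 2 := Real.HolderConjugate.two_two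
  have holder := ENNReal.lintegral_mul_le_Lp_mul_Lq μ hconj hf.aemeasurable hg.aemeasurable
  have hfg : ∫⁻ x, (f * U.indicator (1 : X → ℝ≥0∞)) x ∂μ = ∫⁻ x, f x ∂μ := by
    refine lintegral_congr fun x => ?_
    rw [Pi.mul_apply]
    by_cases hx : x ∈ U
    · rw [Set.indicator_of_mem hx, Pi.one_apply, mul_one]
    · have hz : f x = 0 := Finset.sum_eq_zero fun n hn =>
        Set.indicator_of_notMem (fun hmem => hx (Set.mem_biUnion hn hmem)) _
      rw [hz, zero_mul]
  rw [hfg, hint1, hint2, hint3] at holder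
  have hsq : ∀ a : ℝ≥0∞, (a ^ (1 / 2 : ℝ)) ^ (2 : ℕ) = a := by
    intro a
    rw [← ENNReal.rpow_natCast (a ^ (1 / 2 : ℝ)) 2, ← ENNReal.rpow_mul]
    norm_num
  calc (∑ n ∈ s, μ (E n)) ^ 2
      ≤ ((∑ j ∈ s, ∑ k ∈ s, μ (E j ∩ E k)) ^ (1/2:ℝ) * (μ U) ^ (1/2:ℝ)) ^ 2 :=
        pow_le_pow_left' holder 2
    _ = μ U * ∑ j ∈ s, ∑ k ∈ s, μ (E j ∩ E k) := by
        rw [mul_pow, hsq, hsq, mul_comm]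

/-- Zero-one measure criterion for shrinking target sets under exponential mixing. -/
theorem stmt_10 {X : Type*} [MetricSpace X] [CompactSpace X] [MeasurableSpace X] [BorelSpace X]
    (μ : Measure X) [IsProbabilityMeasure μ]
    (T : X → X) (hT : MeasurePreserving T μ μ)
    (C γ : ℝ) (hC : 0 < C) (hγ : γ ∈ Set.Ioo (0 : ℝ) 1)
    (hmix : ∀ (z : X) (r : ℝ) (F : Set X), MeasurableSet F → ∀ n : ℕ,
      |(μ (Metric.ball z r ∩ T^[n] ⁻¹' F)).toReal -
          (μ F).toReal * (μ (Metric.ball z r)).toReal| ≤ C * γ ^ n * (μ F).toReal)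
    (x₀ : X) (ψ : ℕ → ℝ) (hψ : ∀ n, 0 ≤ ψ n)
    (W : Set X) (hWdef : W = {x : X | ∃ᶠ n in atTop, T^[n] x ∈ Metric.ball x₀ (ψ n)}) :
    ((∑' n : ℕ, μ (Metric.ball x₀ (ψ n))) ≠ ⊤ → μ W = 0) ∧
    ((∑' n : ℕ, μ (Metric.ball x₀ (ψ n))) = ⊤ → μ W = 1) := by
  obtain ⟨hγ0, hγ1⟩ := hγ
  have hTm : Measurable T := hT.measurable
  set B : ℕ → Set X := fun n => Metric.ball x₀ (ψ n) with hBdef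
  set E : ℕ → Set X := fun n => T^[n] ⁻¹' B n with hEdef
  have hBm : ∀ n, MeasurableSet (B n) := fun n => measurableSet_ball
  have hEm : ∀ n, MeasurableSet (E n) := fun n => (hTm.iterate n) (hBm n)
  have hEB : ∀ n, μ (E n) = μ (B n) := fun n =>
    (hT.iterate n).measure_preimage (hBm n).nullMeasurableSet
  have hWlim : W = Filter.limsup E atTop := by
    rw [hWdef]; ext x
    rw [mem_limsup_iff_frequently_mem]
    exact Iff.rfl
  constructor
  · -- convergence case
    intro hsum
    rw [hWlim]
    refine measure_limsup_atTop_eq_zero ?_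
    have : ∀ n, μ (E n) = μ (B n) := hEB
    simpa only [this] using hsum
  · -- divergence case
    intro hsum
    set b : ℕ → ℝ := fun n => (μ (B n)).toReal with hbdef
    have hb0 : ∀ n, 0 ≤ b n := fun n => ENNReal.toReal_nonneg
    -- divergence of real partial sums
    have hdiv : ∀ (m : ℕ) (R : ℝ), 0 ≤ R → ∃ N, R ≤ ∑ n ∈ Finset.Ico m N, b n := by
      intro m R hR
      set H := ∑ n ∈ Finset.range m, b n with hHdef
      have hH : 0 ≤ H := Finset.sum_nonneg fun n _ => hb0 n
      have htop : (⨆ t : Finset ℕ, ∑ n ∈ t, μ (B n)) = ⊤ := by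
        rw [← ENNReal.tsum_eq_iSup_sum]; exact hsum
      have hlt : ENNReal.ofReal (R + H) < ⨆ t : Finset ℕ, ∑ n ∈ t, μ (B n) := by
        rw [htop]; exact ENNReal.ofReal_lt_top
      obtain ⟨t, ht⟩ := lt_iSup_iff.mp hlt
      refine ⟨max (t.sup id + 1) m, ?_⟩
      set N := max (t.sup id + 1) m with hNdef
      have hsub : t ⊆ Finset.range N := fun j hj => Finset.mem_range.mpr
        (lt_of_lt_of_le (Nat.lt_succ_of_le (Finset.le_sup (f := id) hj)) (le_max_left _ _))
      have h2 : ENNReal.ofReal (R + H) ≤ ∑ n ∈ Finset.range N, μ (B n) :=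
        le_trans ht.le (Finset.sum_le_sum_of_subset hsub)
      have hfin : ∑ n ∈ Finset.range N, μ (B n) ≠ ⊤ := by
        refine ne_of_lt (ENNReal.sum_lt_top.mpr fun n _ => measure_lt_top μ _)
      have h3 : R + H ≤ (∑ n ∈ Finset.range N, μ (B n)).toReal :=
        (ENNReal.ofReal_le_iff_le_toReal hfin).mp h2
      rw [ENNReal.toReal_sum (fun n _ => measure_ne_top μ _)] at h3
      have hmN : m ≤ N := le_max_right _ _
      rw [Finset.sum_Ico_eq_sub _ hmN]
      linarith
    -- mixing bound on pair intersections
    have hq : ∀ j k, j ≤ k →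
        (μ (E j ∩ E k)).toReal ≤ b j * b k + C * γ ^ (k - j) * b k := by
      intro j k hjk
      have hco : E j ∩ E k = T^[j] ⁻¹' (B j ∩ T^[k-j] ⁻¹' B k) := by
        rw [Set.preimage_inter]
        congr 1
        rw [hEdef]
        show T^[k] ⁻¹' B k = T^[j] ⁻¹' (T^[k - j] ⁻¹' B k)
        rw [← Set.preimage_comp, ← Function.iterate_add, Nat.sub_add_cancel hjk]
      have hmeas : μ (E j ∩ E k) = μ (B j ∩ T^[k-j] ⁻¹' B k) := by
        rw [hco]
        exact (hT.iterate j).measure_preimage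
          (((hBm j).inter ((hTm.iterate (k-j)) (hBm k))).nullMeasurableSet)
      have hmx := hmix x₀ (ψ j) (B k) (hBm k) (k - j)
      rw [abs_le] at hmx
      rw [hmeas]
      have h2 := hmx.2
      have hcomm : (μ (B k)).toReal * (μ (B j)).toReal
          = (μ (B j)).toReal * (μ (B k)).toReal := mul_comm _ _
      simp only [hbdef]
      simp only [hBdef] at h2 hcomm ⊢
      linarith
    set c : ℝ := 2 * C / (1 - γ) with hcdef
    have hc : 0 < c := by
      apply div_pos (by linarith) (by linarith)
    -- main second-moment estimate
    have hmain : ∀ m N : ℕ,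
        (∑ n ∈ Finset.Ico m N, b n) ^ 2 ≤
          (μ (⋃ n ∈ Finset.Ico m N, E n)).toReal *
            ((∑ n ∈ Finset.Ico m N, b n) ^ 2 + c * (∑ n ∈ Finset.Ico m N, b n)) := by
      intro m N
      set s := Finset.Ico m N with hsdef
      set A := ∑ n ∈ s, b n with hAdef
      set U : Set X := ⋃ n ∈ s, E n with hUdef
      set u := (μ U).toReal with hudef
      -- PZ in ℝ≥0∞, transfer to ℝ
      have hPZ := aux_PZ μ E hEm s
      have hQfin : (∑ j ∈ s, ∑ k ∈ s, μ (E j ∩ E k)) ≠ ⊤ := by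
        refine ne_of_lt (ENNReal.sum_lt_top.mpr fun j _ => ?_)
        exact ENNReal.sum_lt_top.mpr fun k _ => measure_lt_top μ _
      have hRfin : μ U * (∑ j ∈ s, ∑ k ∈ s, μ (E j ∩ E k)) ≠ ⊤ :=
        ENNReal.mul_ne_top (measure_ne_top μ _) hQfin
      have hreal := ENNReal.toReal_mono hRfin hPZ
      rw [ENNReal.toReal_pow, ENNReal.toReal_mul,
        ENNReal.toReal_sum (fun n _ => measure_ne_top μ _),
        ENNReal.toReal_sum (fun j _ => by
          exact ne_of_lt (ENNReal.sum_lt_top.mpr fun k _ => measure_lt_top μ _))] at hreal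
      simp only [ENNReal.toReal_sum (fun k _ => measure_ne_top μ _)] at hreal
      have hPA : ∑ n ∈ s, (μ (E n)).toReal = A := by
        refine Finset.sum_congr rfl fun n _ => by rw [hEB n]
      rw [hPA] at hreal
      -- bound the double sum
      have hQle : (∑ j ∈ s, ∑ k ∈ s, (μ (E j ∩ E k)).toReal) ≤ A ^ 2 + c * A := by
        have hqsymm : ∀ j k : ℕ, (μ (E j ∩ E k)).toReal = (μ (E k ∩ E j)).toReal := by
          intro j k; rw [Set.inter_comm]
        set e : ℕ → ℕ → ℝ := fun j k => if j ≤ k then C * γ ^ (k - j) * b k else 0 with hedef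
        have he0 : ∀ j k, 0 ≤ e j k := by
          intro j k
          simp only [hedef]
          split
          · positivity
          · exact le_rfl
        have hstep : ∀ j k : ℕ, (μ (E j ∩ E k)).toReal ≤ b j * b k + e j k + e k j := by
          intro j k
          rcases le_total j k with h | h
          · have h1 := hq j k h
            have h2 : e j k = C * γ ^ (k - j) * b k := if_pos h
            have h3 := he0 k j
            linarith
          · have h1 := hq k j h
            have h2 : e k j = C * γ ^ (j - k) * b j := if_pos h
            have h3 := he0 j k
            rw [hqsymm]
            nlinarith [mul_comm (b k) (b j)]
        have hesum : ∀ w : ℕ → ℕ → ℝ, (∀ j k, w j k = e j k) →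
            ∑ j ∈ s, ∑ k ∈ s, w j k ≤ C / (1 - γ) * A := by
          intro w hw
          have hwe : ∀ j ∈ s, ∀ k ∈ s, w j k = e j k := fun j _ k _ => hw j k
          calc ∑ j ∈ s, ∑ k ∈ s, w j k = ∑ j ∈ s, ∑ k ∈ s, e j k := by
                refine Finset.sum_congr rfl fun j _ => Finset.sum_congr rfl fun k _ => hw j k
            _ = ∑ k ∈ s, ∑ j ∈ s, e j k := Finset.sum_comm
            _ ≤ ∑ k ∈ s, C / (1 - γ) * b k := by
                refine Finset.sum_le_sum fun k _ => ?_
                have hfil : ∑ j ∈ s, e j k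
                    = ∑ j ∈ s.filter (fun j => j ≤ k), C * γ ^ (k - j) * b k := by
                  rw [Finset.sum_filter]
                have hsub : s.filter (fun j => j ≤ k) ⊆ Finset.range (k + 1) := by
                  intro j hj
                  rw [Finset.mem_range, Nat.lt_succ_iff]
                  exact (Finset.mem_filter.mp hj).2
                have hbd : ∑ j ∈ s.filter (fun j => j ≤ k), C * γ ^ (k - j) * b k
                    ≤ ∑ j ∈ Finset.range (k + 1), C * γ ^ (k - j) * b k :=
                  Finset.sum_le_sum_of_subset_of_nonneg hsub (fun j _ _ => by positivity)
                have hre : ∑ j ∈ Finset.range (k + 1), C * γ ^ (k - j) * b k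
                    = (∑ j ∈ Finset.range (k + 1), γ ^ j) * (C * b k) := by
                  rw [Finset.sum_mul]
                  rw [← Finset.sum_range_reflect (fun j => γ ^ j * (C * b k)) (k + 1)]
                  refine Finset.sum_congr rfl fun j hj => ?_
                  have : k + 1 - 1 - j = k - j := by omega
                  rw [this]; ring
                have hge : (∑ j ∈ Finset.range (k + 1), γ ^ j) * (C * b k)
                    ≤ 1 / (1 - γ) * (C * b k) := by
                  refine mul_le_mul_of_nonneg_right (aux_geom (le_of_lt hγ0) hγ1 (k + 1))
                    (by positivity)
                rw [hfil]
                calc ∑ j ∈ s.filter (fun j => j ≤ k), C * γ ^ (k - j) * b k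
                    ≤ 1 / (1 - γ) * (C * b k) := by
                      rw [hre] at hbd; exact le_trans hbd hge
                  _ = C / (1 - γ) * b k := by ring
            _ = C / (1 - γ) * A := by rw [hAdef, Finset.mul_sum]
        have hsum1 : ∑ j ∈ s, ∑ k ∈ s, e j k ≤ C / (1 - γ) * A :=
          hesum e (fun _ _ => rfl)
        have hsum2 : ∑ j ∈ s, ∑ k ∈ s, e k j ≤ C / (1 - γ) * A := by
          rw [Finset.sum_comm]
          exact hesum e (fun _ _ => rfl)
        calc ∑ j ∈ s, ∑ k ∈ s, (μ (E j ∩ E k)).toReal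
            ≤ ∑ j ∈ s, ∑ k ∈ s, (b j * b k + e j k + e k j) := by
              refine Finset.sum_le_sum fun j _ => Finset.sum_le_sum fun k _ => hstep j k
          _ = (∑ j ∈ s, ∑ k ∈ s, b j * b k) + (∑ j ∈ s, ∑ k ∈ s, e j k)
              + (∑ j ∈ s, ∑ k ∈ s, e k j) := by
              simp [Finset.sum_add_distrib]
          _ ≤ A ^ 2 + C / (1 - γ) * A + C / (1 - γ) * A := by
              have hA2 : (∑ j ∈ s, ∑ k ∈ s, b j * b k) = A ^ 2 := by
                rw [hAdef, sq, Finset.sum_mul_sum]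
              rw [hA2]
              exact add_le_add (add_le_add le_rfl hsum1) hsum2
          _ = A ^ 2 + c * A := by rw [hcdef]; ring
      have hu0 : (0:ℝ) ≤ u := ENNReal.toReal_nonneg
      calc A ^ 2 ≤ u * ∑ j ∈ s, ∑ k ∈ s, (μ (E j ∩ E k)).toReal := hreal
        _ ≤ u * (A ^ 2 + c * A) := mul_le_mul_of_nonneg_left hQle hu0
    -- conclude full measure of each tail union
    have hGm : ∀ m : ℕ, μ (⋃ (n : ℕ) (_ : m ≤ n), E n) = 1 := by
      intro m
      set G : Set X := ⋃ (n : ℕ) (_ : m ≤ n), E n with hGdef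
      have key : ∀ ε : ℝ, 0 < ε → 1 - ε ≤ (μ G).toReal := by
        intro ε hε
        rcases le_or_gt 1 ε with hεbig | hεsmall
        · exact le_trans (by linarith) ENNReal.toReal_nonneg
        obtain ⟨N, hN⟩ := hdiv m (c / ε) (le_of_lt (div_pos hc hε))
        set A := ∑ n ∈ Finset.Ico m N, b n with hAdef
        have hA0 : 0 < A := lt_of_lt_of_le (div_pos hc hε) hN
        have hcA : c ≤ ε * A := by
          rw [div_le_iff₀ hε] at hN; linarith
        have hUG : (⋃ n ∈ Finset.Ico m N, E n) ⊆ G := by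
          refine Set.iUnion₂_subset fun n hn => ?_
          exact Set.subset_iUnion₂ (s := fun n _ => E n) n (Finset.mem_Ico.mp hn).1
        set u := (μ (⋃ n ∈ Finset.Ico m N, E n)).toReal with hudef
        have hu0 : (0:ℝ) ≤ u := ENNReal.toReal_nonneg
        have hmainN := hmain m N
        rw [← hAdef, ← hudef] at hmainN
        have hucA : u * c * A ≤ u * (ε * A) * A :=
          mul_le_mul_of_nonneg_right (mul_le_mul_of_nonneg_left hcA hu0) hA0.le
        have hu : 1 - ε ≤ u := by
          nlinarith [hmainN, hucA, mul_pos hA0 hA0, hu0, hε, hεsmall,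
            mul_pos (mul_pos hε hA0) hA0]
        refine le_trans hu (ENNReal.toReal_mono (measure_ne_top μ G) (measure_mono hUG))
      have h1le : (1:ℝ) ≤ (μ G).toReal :=
        le_of_forall_sub_le fun ε hε => key ε hε
      refine le_antisymm prob_le_one ?_
      rw [← ENNReal.ofReal_one]
      exact ENNReal.ofReal_le_of_le_toReal h1le
    -- W is the intersection of the tail unions
    have hWeq : W = ⋂ m : ℕ, ⋃ (n : ℕ) (_ : m ≤ n), E n := by
      rw [hWdef]; ext x
      simp only [hEdef, hBdef, Set.mem_setOf_eq, frequently_atTop, Set.mem_iInter,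
        Set.mem_iUnion, Set.mem_preimage, ge_iff_le, exists_prop]
    have hGmeas : ∀ m : ℕ, MeasurableSet (⋃ (n : ℕ) (_ : m ≤ n), E n) :=
      fun m => MeasurableSet.iUnion fun n => MeasurableSet.iUnion fun _ => hEm n
    rw [hWeq]
    rw [← prob_compl_eq_zero_iff (MeasurableSet.iInter hGmeas)]
    rw [Set.compl_iInter]
    refine measure_iUnion_null fun m => ?_
    rw [prob_compl_eq_zero_iff (hGmeas m)]
    exact hGm m
end

section
/- Let K be the middle-third Cantor set, T(x) = 3x mod 1, and μ the Bernoulli measure on K associated to a probability vector (p₁, p₂) with p₁ ≠ p₂. Let ψ_α(n) = 3^{−⌊α log n⌋}. If 1/(−(p₁ log p₁ + p₂ log p₂)) < α < 1/(−log(p₁² + p₂²)), then ∑_{n=1}^∞ μ(R_n(T, ψ_α)) = ∞ while μ(R(T, ψ_α)) = 0, where R_n(T,ψ) := {x ∈ K : Tⁿx ∈ B(x, ψ(n))} and R(T,ψ) = limsup R_n. -/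
open MeasureTheory Filter Set Metric
open scoped ENNReal Topology

/-!
Points of `[0, 1)` are coded by their ternary digits in `{0, 2}`; the cylinder of a word `u` has
mass `weight u = ∏ p_{uᵢ}` and the tripling map shifts the digits. For `m ≤ n`, a point returns
`3⁻¹ ^ m`-close to itself at time `n` exactly when its first `n + m` digits read `u v u`, so the
return set has mass `∑ᵤ weight u ^ 2 = (p₁² + p₂²) ^ m`; with `m = ⌊α log n⌋` this is about
`n ^ (α log (p₁² + p₂²))`, which is not summable.

That mass is carried by atypically heavy words. Splitting at the threshold `weight u ≤ θ ^ m`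
with `e^{-H} < θ < e^{-1/α}` (`H` the entropy), the light words contribute at most
`θ ^ m ≈ n ^ (α log θ)`, which is summable, while by a Chernoff bound the heavy words have total
mass `≤ ρ ^ m` with `ρ < 1`. Borel–Cantelli, applied to both parts, makes the limsup null.
-/

namespace CantorBernoulli

open Real

def digit (b : Bool) : ℝ := if b then 2 else 0

@[simp] lemma digit_false : digit false = 0 := rfl
@[simp] lemma digit_true : digit true = 2 := rfl

noncomputable def cylinderStart : List Bool → ℝ
  | [] => 0
  | b :: w => (cylinderStart w + digit b) / 3

/-- The points of `[0, 1)` whose ternary expansion starts with the digits of `w`. Half-open, so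
that cylinders of the same length are disjoint and `tripling` maps `cylinder (b :: w)` into
`cylinder w` without exception. -/
noncomputable def cylinder (w : List Bool) : Set ℝ :=
  Ico (cylinderStart w) (cylinderStart w + 3⁻¹ ^ w.length)

@[simp] lemma cylinder_nil : cylinder [] = Ico 0 1 := by
  simp [cylinder, cylinderStart]

def weight (p₁ p₂ : ℝ) : List Bool → ℝ
  | [] => 1
  | b :: w => (if b then p₂ else p₁) * weight p₁ p₂ w

def words : ℕ → Finset (List Bool)
  | 0 => {[]}
  | k + 1 => (words k).image (List.cons false) ∪ (words k).image (List.cons true)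

lemma mem_cylinder_cons_iff {b : Bool} {w : List Bool} {x : ℝ} :
    x ∈ cylinder (b :: w) ↔ 3 * x - digit b ∈ cylinder w := by
  simp only [cylinder, cylinderStart, List.length_cons, pow_succ, mem_Ico]
  constructor <;> rintro ⟨h₁, h₂⟩ <;> constructor <;> linarith

lemma cylinder_subset_Ico (w : List Bool) : cylinder w ⊆ Ico 0 1 := by
  induction w with
  | nil => simp
  | cons b w ih =>
    intro x hx
    obtain ⟨h₀, h₁⟩ := ih (mem_cylinder_cons_iff.1 hx)
    cases b <;> simp only [digit_false, digit_true, mem_Ico] at h₀ h₁ ⊢ <;> constructor <;> linarith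

lemma cylinder_append_subset (u v : List Bool) : cylinder (u ++ v) ⊆ cylinder u := by
  induction u with
  | nil => simpa using cylinder_subset_Ico v
  | cons b u ih => exact fun x hx => mem_cylinder_cons_iff.2 (ih (mem_cylinder_cons_iff.1 hx))

lemma mem_cylinder_take {w : List Bool} {x : ℝ} (hx : x ∈ cylinder w) (m : ℕ) :
    x ∈ cylinder (w.take m) := by
  rw [← List.take_append_drop m w] at hx
  exact cylinder_append_subset _ _ hx

lemma dist_lt_of_mem_cylinder {w : List Bool} {x y : ℝ} (hx : x ∈ cylinder w)
    (hy : y ∈ cylinder w) : dist x y < 3⁻¹ ^ w.length := by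
  obtain ⟨hx₀, hx₁⟩ := hx
  obtain ⟨hy₀, hy₁⟩ := hy
  rw [Real.dist_eq, abs_sub_lt_iff]
  constructor <;> linarith

lemma le_dist_of_mem_cylinder {u v : List Bool} (hlen : u.length = v.length) (hne : u ≠ v)
    {x y : ℝ} (hx : x ∈ cylinder u) (hy : y ∈ cylinder v) : 3⁻¹ ^ u.length ≤ dist x y := by
  induction u generalizing v x y with
  | nil => exact absurd (List.length_eq_zero_iff.1 hlen.symm).symm hne
  | cons a u ih =>
    obtain _ | ⟨b, v⟩ := v
    · simp at hlen
    rw [mem_cylinder_cons_iff] at hx hy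
    rw [List.length_cons, pow_succ]
    by_cases hab : a = b
    · subst hab
      have hdist := ih (by simpa using hlen) (by simpa using hne) hx hy
      rw [Real.dist_eq] at hdist ⊢
      rw [show 3 * x - digit a - (3 * y - digit a) = 3 * (x - y) by ring, abs_mul] at hdist
      norm_num at hdist
      linarith
    · obtain ⟨hx₀, hx₁⟩ := cylinder_subset_Ico u hx
      obtain ⟨hy₀, hy₁⟩ := cylinder_subset_Ico v hy
      have hpow : (3 : ℝ)⁻¹ ^ u.length ≤ 1 := pow_le_one₀ (by norm_num) (by norm_num)
      rw [Real.dist_eq]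
      cases a <;> cases b <;> simp only [digit_false, digit_true] at hab hx₀ hx₁ hy₀ hy₁
      · exact absurd trivial hab
      · rw [abs_sub_comm, abs_of_pos (by linarith)]; linarith
      · rw [abs_of_pos (by linarith)]; linarith
      · exact absurd trivial hab

lemma eq_of_mem_cylinder {u v : List Bool} (hlen : u.length = v.length) {x : ℝ}
    (hu : x ∈ cylinder u) (hv : x ∈ cylinder v) : u = v := by
  by_contra hne
  have := le_dist_of_mem_cylinder hlen hne hu hv
  rw [dist_self] at this
  exact (pow_pos (by norm_num : (0 : ℝ) < 3⁻¹) _).not_ge this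

lemma measurableSet_cylinder (w : List Bool) : MeasurableSet (cylinder w) := measurableSet_Ico

lemma mem_words {k : ℕ} {w : List Bool} : w ∈ words k ↔ w.length = k := by
  induction k generalizing w with
  | zero => simp [words]
  | succ k ih =>
    obtain _ | ⟨b, w⟩ := w
    · simp [words]
    · cases b <;> simp [words, ih]

lemma pairwiseDisjoint_cylinder (k : ℕ) : (words k : Set (List Bool)).PairwiseDisjoint cylinder :=
  fun u hu v hv huv => disjoint_left.2 fun _ hxu hxv =>
    huv (eq_of_mem_cylinder (by rw [mem_words.1 hu, mem_words.1 hv]) hxu hxv)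

lemma weight_nonneg {p₁ p₂ : ℝ} (hp₁ : 0 ≤ p₁) (hp₂ : 0 ≤ p₂) (w : List Bool) :
    0 ≤ weight p₁ p₂ w := by
  induction w with
  | nil => simp [weight]
  | cons b w ih => cases b <;> simp only [weight] <;> positivity

lemma weight_append (p₁ p₂ : ℝ) (u v : List Bool) :
    weight p₁ p₂ (u ++ v) = weight p₁ p₂ u * weight p₁ p₂ v := by
  induction u with
  | nil => simp [weight]
  | cons b u ih => simp only [List.cons_append, weight, ih, mul_assoc]

lemma weight_pow (p₁ p₂ : ℝ) (w : List Bool) (k : ℕ) :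
    weight p₁ p₂ w ^ k = weight (p₁ ^ k) (p₂ ^ k) w := by
  induction w with
  | nil => simp [weight]
  | cons b w ih => cases b <;> simp [weight, mul_pow, ih]

lemma weight_rpow {p₁ p₂ : ℝ} (hp₁ : 0 ≤ p₁) (hp₂ : 0 ≤ p₂) (w : List Bool) (s : ℝ) :
    weight p₁ p₂ w ^ s = weight (p₁ ^ s) (p₂ ^ s) w := by
  induction w with
  | nil => simp [weight]
  | cons b w ih =>
    cases b <;> simp only [weight, Bool.false_eq_true, if_true, if_false, ← ih] <;>
      exact Real.mul_rpow (by assumption) (weight_nonneg hp₁ hp₂ w)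

lemma sum_weight (p₁ p₂ : ℝ) (k : ℕ) : ∑ w ∈ words k, weight p₁ p₂ w = (p₁ + p₂) ^ k := by
  induction k with
  | zero => simp [words, weight]
  | succ k ih =>
    have hdisj : Disjoint ((words k).image (List.cons false)) ((words k).image (List.cons true)) :=
      Finset.disjoint_left.2 (by simp)
    rw [words, Finset.sum_union hdisj, Finset.sum_image (by simp), Finset.sum_image (by simp)]
    simp only [weight, Bool.false_eq_true, if_true, if_false, ← Finset.mul_sum, ih]
    ring

lemma sum_weight_filter_lt_le {p₁ p₂ θ s : ℝ} (hp₁ : 0 ≤ p₁) (hp₂ : 0 ≤ p₂) (hθ : 0 < θ)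
    (hs : 0 ≤ s) (m : ℕ) :
    ∑ u ∈ (words m).filter (fun u => θ ^ m < weight p₁ p₂ u), weight p₁ p₂ u ≤
      ((p₁ ^ (1 + s) + p₂ ^ (1 + s)) / θ ^ s) ^ m := by
  have hθm : 0 < (θ ^ s) ^ m := by positivity
  calc ∑ u ∈ (words m).filter (fun u => θ ^ m < weight p₁ p₂ u), weight p₁ p₂ u
      ≤ ∑ u ∈ (words m).filter (fun u => θ ^ m < weight p₁ p₂ u),
          weight p₁ p₂ u ^ (1 + s) / (θ ^ s) ^ m := Finset.sum_le_sum fun u hu => by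
        have hheavy := (Finset.mem_filter.1 hu).2
        have hw : 0 < weight p₁ p₂ u := (pow_pos hθ m).trans hheavy
        rw [le_div_iff₀ hθm, Real.rpow_add hw, Real.rpow_one, Real.rpow_pow_comm hθ.le]
        exact mul_le_mul_of_nonneg_left (Real.rpow_le_rpow (by positivity) hheavy.le hs) hw.le
    _ ≤ ∑ u ∈ words m, weight p₁ p₂ u ^ (1 + s) / (θ ^ s) ^ m :=
        Finset.sum_le_sum_of_subset_of_nonneg (Finset.filter_subset _ _) fun u _ _ =>
          div_nonneg (Real.rpow_nonneg (weight_nonneg hp₁ hp₂ u) _) hθm.le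
    _ = ((p₁ ^ (1 + s) + p₂ ^ (1 + s)) / θ ^ s) ^ m := by
        rw [← Finset.sum_div, div_pow]
        simp_rw [weight_rpow hp₁ hp₂, sum_weight]

lemma subset_Icc_of_eq_union_image {K : Set ℝ} (hK : IsCompact K) (hne : K.Nonempty)
    (hself : K = (fun x : ℝ => x / 3) '' K ∪ (fun x : ℝ => (x + 2) / 3) '' K) :
    K ⊆ Icc 0 1 := by
  have hsup : sSup K ≤ 1 := by
    rcases hself.subset (hK.sSup_mem hne) with ⟨y, hy, hyM⟩ | ⟨y, hy, hyM⟩ <;>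
      linarith [le_csSup hK.bddAbove hy, le_csSup hK.bddAbove (hK.sSup_mem hne)]
  have hinf : 0 ≤ sInf K := by
    rcases hself.subset (hK.sInf_mem hne) with ⟨y, hy, hym⟩ | ⟨y, hy, hym⟩ <;>
      linarith [csInf_le hK.bddBelow hy]
  exact fun x hx => ⟨hinf.trans (csInf_le hK.bddBelow hx), (le_csSup hK.bddAbove hx).trans hsup⟩

section SelfSimilar

variable {μ : Measure ℝ} {p₁ p₂ : ℝ}
  (hμ : μ = ENNReal.ofReal p₁ • μ.map (fun x : ℝ => x / 3) +
    ENNReal.ofReal p₂ • μ.map (fun x : ℝ => (x + 2) / 3))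
include hμ

lemma measure_eq_add_measure_preimage {A : Set ℝ} (hA : MeasurableSet A) :
    μ A = ENNReal.ofReal p₁ * μ ((fun x : ℝ => x / 3) ⁻¹' A) +
      ENNReal.ofReal p₂ * μ ((fun x : ℝ => (x + 2) / 3) ⁻¹' A) := by
  conv_lhs => rw [hμ]
  rw [Measure.add_apply, Measure.smul_apply, Measure.smul_apply,
    Measure.map_apply (by fun_prop) hA, Measure.map_apply (by fun_prop) hA, smul_eq_mul,
    smul_eq_mul]

variable [IsProbabilityMeasure μ]

/-- `1` is the fixed point of `x ↦ (x + 2) / 3`, so `μ {1} = p₂ μ {1}`. -/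
lemma measure_compl_Ico_eq_zero (hp₂ : p₂ < 1) (h01 : μ (Icc 0 1)ᶜ = 0) : μ (Ico 0 1)ᶜ = 0 := by
  have hone : μ {1} = 0 := by
    have h3 : μ ((fun x : ℝ => x / 3) ⁻¹' {1}) = 0 := by
      refine measure_mono_null ?_ h01
      intro x hx h
      simp only [mem_preimage, mem_singleton_iff] at hx
      linarith [h.2]
    have h := measure_eq_add_measure_preimage hμ (measurableSet_singleton (1 : ℝ))
    have hfix : (fun x : ℝ => (x + 2) / 3) ⁻¹' {1} = {1} := by
      ext x; simp only [mem_preimage, mem_singleton_iff]; constructor <;> intro h <;> linarith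
    rw [h3, mul_zero, zero_add, hfix] at h
    by_contra hne
    have := (ENNReal.mul_eq_left hne (measure_ne_top μ _)).1 (by rw [mul_comm]; exact h.symm)
    exact (ENNReal.ofReal_lt_one.2 hp₂).ne this
  rw [← Icc_sdiff_right, Set.compl_sdiff]
  exact measure_union_null hone h01

lemma measure_cylinder (hp₁ : 0 ≤ p₁) (hp₂ : 0 ≤ p₂) (hp₂₁ : p₂ < 1) (h01 : μ (Icc 0 1)ᶜ = 0)
    (w : List Bool) : μ (cylinder w) = ENNReal.ofReal (weight p₁ p₂ w) := by
  induction w with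
  | nil =>
    rw [cylinder_nil, weight, ENNReal.ofReal_one,
      ← prob_compl_eq_zero_iff measurableSet_Ico]
    exact measure_compl_Ico_eq_zero hμ hp₂₁ h01
  | cons b w ih =>
    have hnull : ∀ c : ℝ, (c = 2 ∨ c = -2) → μ ((fun x => x + c) ⁻¹' cylinder w) = 0 := by
      refine fun c hc => measure_mono_null ?_ h01
      intro x hx hx01
      have := cylinder_subset_Ico w hx
      simp only [mem_Ico, mem_Icc] at this hx01
      rcases hc with rfl | rfl <;> linarith
    rw [measure_eq_add_measure_preimage hμ (measurableSet_cylinder _)]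
    cases b
    · have h₁ : (fun x : ℝ => x / 3) ⁻¹' cylinder (false :: w) = cylinder w := by
        ext x; simp [mem_cylinder_cons_iff, mul_div_cancel₀]
      have h₂ : (fun x : ℝ => (x + 2) / 3) ⁻¹' cylinder (false :: w) =
          (fun x => x + 2) ⁻¹' cylinder w := by
        ext x; simp [mem_cylinder_cons_iff, mul_div_cancel₀]
      rw [h₁, h₂, hnull 2 (Or.inl rfl), ih, weight, if_neg Bool.false_ne_true,
        ENNReal.ofReal_mul hp₁, mul_zero, add_zero]
    · have h₁ : (fun x : ℝ => x / 3) ⁻¹' cylinder (true :: w) =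
          (fun x => x + -2) ⁻¹' cylinder w := by
        ext x; simp [mem_cylinder_cons_iff, mul_div_cancel₀, sub_eq_add_neg]
      have h₂ : (fun x : ℝ => (x + 2) / 3) ⁻¹' cylinder (true :: w) = cylinder w := by
        ext x; simp [mem_cylinder_cons_iff, mul_div_cancel₀]
      rw [h₁, h₂, hnull (-2) (Or.inr rfl), ih, weight, if_pos rfl,
        ENNReal.ofReal_mul hp₂, mul_zero, zero_add]

end SelfSimilar

noncomputable def tripling (x : ℝ) : ℝ := Int.fract (3 * x)

lemma tripling_mem_Ico (x : ℝ) : tripling x ∈ Ico 0 1 :=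
  ⟨Int.fract_nonneg _, Int.fract_lt_one _⟩

lemma digit_eq_intCast (b : Bool) : ∃ z : ℤ, digit b = z := by
  cases b
  · exact ⟨0, by simp [digit]⟩
  · exact ⟨2, by simp [digit]⟩

lemma tripling_mem_cylinder {b : Bool} {w : List Bool} {x : ℝ} (hx : x ∈ cylinder (b :: w)) :
    tripling x ∈ cylinder w := by
  rw [mem_cylinder_cons_iff] at hx
  obtain ⟨h₀, h₁⟩ := cylinder_subset_Ico w hx
  obtain ⟨z, hz⟩ := digit_eq_intCast b
  have : tripling x = 3 * x - digit b :=
    Int.fract_eq_iff.2 ⟨h₀, h₁, z, by rw [hz]; ring⟩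
  rwa [this]

lemma iterate_tripling_mem_cylinder_drop {w : List Bool} {x : ℝ} (hx : x ∈ cylinder w) (n : ℕ) :
    tripling^[n] x ∈ cylinder (w.drop n) := by
  induction n generalizing w x with
  | zero => simpa
  | succ n ih =>
    rw [Function.iterate_succ_apply]
    obtain _ | ⟨b, w⟩ := w
    · simpa using ih (x := tripling x) (w := []) (by rw [cylinder_nil]; exact tripling_mem_Ico x)
    · exact ih (tripling_mem_cylinder hx)

noncomputable def returnSet (n m : ℕ) : Set ℝ := {x | dist (tripling^[n] x) x < 3⁻¹ ^ m}

lemma measurableSet_returnSet (n m : ℕ) : MeasurableSet (returnSet n m) := by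
  have : Measurable tripling := (measurable_const_mul 3).fract
  exact measurableSet_lt ((this.iterate n).dist measurable_id) measurable_const

lemma returnSet_inter_cylinder {u : List Bool} {m n : ℕ} (hu : u.length = m) (hmn : m ≤ n) :
    returnSet n m ∩ cylinder u ∩ ⋃ w ∈ words (n + m), cylinder w =
      ⋃ v ∈ words (n - m), cylinder (u ++ v ++ u) := by
  ext x
  simp only [returnSet, mem_inter_iff, mem_iUnion, mem_ofPred_eq, mem_words, exists_prop]
  constructor
  · rintro ⟨⟨hret, hxu⟩, w, hw, hxw⟩
    have htake : w.take m = u :=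
      eq_of_mem_cylinder (by simp [hu, hw]) (mem_cylinder_take hxw m) hxu
    have hdrop : w.drop n = u := by
      by_contra hne
      have := le_dist_of_mem_cylinder (by simp [hu, hw]) hne
        (iterate_tripling_mem_cylinder_drop hxw n) hxu
      rw [List.length_drop, hw, Nat.add_sub_cancel_left] at this
      exact this.not_gt hret
    refine ⟨(w.take n).drop m, by simp [hw], ?_⟩
    have hw' : w = u ++ (w.take n).drop m ++ u := by
      conv_lhs => rw [← List.take_append_drop n w, ← List.take_append_drop m (w.take n)]
      rw [List.take_take, min_eq_left hmn, htake, hdrop]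
    rwa [← hw']
  · rintro ⟨v, hv, hx⟩
    have hxu : x ∈ cylinder u := cylinder_append_subset _ _ (cylinder_append_subset _ _ hx)
    have hret : tripling^[n] x ∈ cylinder u := by
      have := iterate_tripling_mem_cylinder_drop hx n
      rwa [List.drop_left' (by simp [hu, hv]; omega)] at this
    refine ⟨⟨hu ▸ dist_lt_of_mem_cylinder hret hxu, hxu⟩, u ++ v ++ u, ?_, hx⟩
    simp [hu, hv]
    omega

/-- `s ↦ p₁ ^ (1 + s) + p₂ ^ (1 + s) - θ ^ s` vanishes at `0` with slope
`p₁ log p₁ + p₂ log p₂ - log θ < 0`. -/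
lemma exists_pos_rpow_add_rpow_lt {p₁ p₂ θ : ℝ} (hp₁ : 0 < p₁) (hp₂ : 0 < p₂)
    (hsum : p₁ + p₂ = 1) (hθ : 0 < θ) (h : p₁ * log p₁ + p₂ * log p₂ < log θ) :
    ∃ s : ℝ, 0 < s ∧ p₁ ^ (1 + s) + p₂ ^ (1 + s) < θ ^ s := by
  set G : ℝ → ℝ := fun s => p₁ ^ (1 + s) + p₂ ^ (1 + s) - θ ^ s
  have hG : HasDerivAt G (p₁ * log p₁ + p₂ * log p₂ - log θ) 0 := by
    have h₁ := ((hasDerivAt_id (0 : ℝ)).const_add 1).const_rpow hp₁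
    have h₂ := ((hasDerivAt_id (0 : ℝ)).const_add 1).const_rpow hp₂
    have h₃ := (hasDerivAt_id (0 : ℝ)).const_rpow hθ
    have hsum' := (h₁.add h₂).sub h₃
    simp only [id, add_zero, Real.rpow_one, Real.rpow_zero, mul_one] at hsum'
    exact hsum'.congr_deriv (by ring)
  obtain ⟨s, hslope, hs⟩ := ((hG.hasDerivWithinAt.liminf_right_slope_le
    (sub_neg.2 h)).and_eventually self_mem_nhdsWithin).exists
  refine ⟨s, hs, ?_⟩
  have hG0 : G 0 = 0 := by simp [G, hsum]
  rw [slope_def_field, hG0, sub_zero, sub_zero, div_neg_iff] at hslope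
  simp only [G] at hslope
  rcases hslope with ⟨_, hs'⟩ | ⟨hG', _⟩
  · exact absurd hs (not_lt.2 hs'.le)
  · linarith

lemma rpow_mul_log_comm {x y : ℝ} (hx : 0 < x) (hy : 0 < y) (a : ℝ) :
    x ^ (a * log y) = y ^ (a * log x) := by
  rw [Real.rpow_def_of_pos hx, Real.rpow_def_of_pos hy]
  ring_nf

lemma rpow_mul_log_le_pow_natFloor {q α : ℝ} (hq₀ : 0 < q) (hq₁ : q ≤ 1) (hα : 0 ≤ α) {n : ℕ}
    (hn : 0 < n) : (n : ℝ) ^ (α * log q) ≤ q ^ ⌊α * log n⌋₊ := by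
  rw [← rpow_mul_log_comm hq₀ (by positivity), ← Real.rpow_natCast]
  exact Real.rpow_le_rpow_of_exponent_ge hq₀ hq₁
    (Nat.floor_le (mul_nonneg hα (Real.log_natCast_nonneg n)))

lemma pow_natFloor_le_rpow_mul_log {θ α : ℝ} (hθ₀ : 0 < θ) (hθ₁ : θ ≤ 1) {n : ℕ} (hn : 0 < n) :
    θ ^ ⌊α * log n⌋₊ ≤ θ⁻¹ * (n : ℝ) ^ (α * log θ) := by
  rw [← rpow_mul_log_comm hθ₀ (by positivity), ← Real.rpow_natCast, ← Real.rpow_neg_one,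
    ← Real.rpow_add hθ₀]
  exact Real.rpow_le_rpow_of_exponent_ge hθ₀ hθ₁ (by linarith [Nat.lt_floor_add_one (α * log n)])

lemma eventually_natFloor_mul_log_le {α : ℝ} (hα : 0 < α) :
    ∀ᶠ n : ℕ in atTop, ⌊α * log n⌋₊ ≤ n := by
  filter_upwards [tendsto_natCast_atTop_atTop.eventually
    (Real.isLittleO_log_id_atTop.bound (inv_pos.2 hα))] with n hn
  refine Nat.floor_le_of_le ?_
  rw [Real.norm_eq_abs, Real.norm_eq_abs, id, Nat.abs_cast] at hn
  calc α * log n ≤ α * |log n| := mul_le_mul_of_nonneg_left (le_abs_self _) hα.le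
    _ ≤ α * (α⁻¹ * n) := mul_le_mul_of_nonneg_left hn hα.le
    _ = n := by field_simp

lemma tendsto_natFloor_mul_log {α : ℝ} (hα : 0 < α) :
    Tendsto (fun n : ℕ => ⌊α * log n⌋₊) atTop atTop :=
  tendsto_nat_floor_atTop.comp
    ((Real.tendsto_log_atTop.const_mul_atTop hα).comp tendsto_natCast_atTop_atTop)

lemma tsum_eq_top_of_eventually_ofReal_le {f : ℕ → ℝ≥0∞} {g : ℕ → ℝ} (hg₀ : ∀ n, 0 ≤ g n)
    (hg : ¬Summable g) (h : ∀ᶠ n in atTop, ENNReal.ofReal (g n) ≤ f n) : ∑' n, f n = ∞ := by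
  by_contra hf
  refine hg (.of_norm_bounded_eventually_nat (ENNReal.summable_toReal hf) ?_)
  filter_upwards [h] with n hn
  rw [Real.norm_of_nonneg (hg₀ n)]
  exact (ENNReal.ofReal_le_iff_le_toReal (ENNReal.ne_top_of_tsum_ne_top hf n)).1 hn

lemma measure_limsup_atTop_eq_zero_of_eventually_le {α : Type*} [MeasurableSpace α]
    {μ : Measure α} {s : ℕ → Set α} {f : ℕ → ℝ≥0∞} (hf : ∑' n, f n ≠ ∞)
    (h : ∀ᶠ n in atTop, μ (s n) ≤ f n) : μ (limsup s atTop) = 0 := by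
  obtain ⟨N, hN⟩ := eventually_atTop.1 h
  rw [← limsup_nat_add s N]
  refine measure_limsup_atTop_eq_zero (ne_top_of_le_ne_top hf ?_)
  calc ∑' n, μ (s (n + N)) ≤ ∑' n, f (n + N) :=
        ENNReal.tsum_le_tsum fun n => hN _ (Nat.le_add_left N n)
    _ ≤ ∑' n, f n := ENNReal.tsum_comp_le_tsum_of_injective (add_left_injective N) f

lemma limsup_subset_limsup_inter_union {α : Type*} {s : ℕ → Set α} (t : ℕ → Set α)
    {u : ℕ → ℕ} (hu : Tendsto u atTop atTop) :
    limsup s atTop ⊆ limsup (fun n => s n ∩ t (u n)) atTop ∪ limsup (fun k => (t k)ᶜ) atTop := by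
  intro x hx
  simp only [mem_union, mem_limsup_iff_frequently_mem, mem_inter_iff, mem_compl_iff] at hx ⊢
  rw [or_iff_not_imp_right, not_frequently]
  intro ht
  exact (hx.and_eventually (hu.eventually (ht.mono fun _ => not_not.1))).mono fun _ => id

noncomputable def lightSet (p₁ p₂ θ : ℝ) (m : ℕ) : Set ℝ :=
  ⋃ u ∈ (words m).filter (fun u => weight p₁ p₂ u ≤ θ ^ m), cylinder u

section BernoulliMeasure

variable {μ : Measure ℝ} [IsProbabilityMeasure μ] {p₁ p₂ : ℝ}
  (hp₁ : 0 ≤ p₁) (hp₂ : 0 ≤ p₂) (hsum : p₁ + p₂ = 1)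
  (hμ : ∀ w, μ (cylinder w) = ENNReal.ofReal (weight p₁ p₂ w))
include hp₁ hp₂ hsum hμ

lemma measure_compl_iUnion_cylinder (k : ℕ) : μ (⋃ w ∈ words k, cylinder w)ᶜ = 0 := by
  rw [prob_compl_eq_zero_iff (Finset.measurableSet_biUnion _ fun w _ => measurableSet_cylinder w),
    measure_biUnion_finset (pairwiseDisjoint_cylinder k) fun w _ => measurableSet_cylinder w]
  simp_rw [hμ]
  rw [← ENNReal.ofReal_sum_of_nonneg fun w _ => weight_nonneg hp₁ hp₂ w, sum_weight, hsum,
    one_pow, ENNReal.ofReal_one]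

lemma measure_returnSet_inter_cylinder {u : List Bool} {m n : ℕ} (hu : u.length = m)
    (hmn : m ≤ n) : μ (returnSet n m ∩ cylinder u) = ENNReal.ofReal (weight p₁ p₂ u ^ 2) := by
  have hdisj :
      (words (n - m) : Set (List Bool)).PairwiseDisjoint fun v => cylinder (u ++ v ++ u) :=
    fun v hv v' hv' hvv' => disjoint_left.2 fun _ hx hx' => hvv' <| by
      have := eq_of_mem_cylinder (by simp [mem_words.1 hv, mem_words.1 hv']) hx hx'
      simpa using this
  rw [← measure_inter_conull (measure_compl_iUnion_cylinder hp₁ hp₂ hsum hμ (n + m)),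
    returnSet_inter_cylinder hu hmn,
    measure_biUnion_finset hdisj fun v _ => measurableSet_cylinder _]
  simp_rw [hμ, weight_append]
  rw [← ENNReal.ofReal_sum_of_nonneg fun v _ => by
    have := weight_nonneg hp₁ hp₂ u; have := weight_nonneg hp₁ hp₂ v; positivity]
  simp_rw [mul_right_comm _ _ (weight p₁ p₂ u), ← sq]
  rw [← Finset.mul_sum, sum_weight, hsum, one_pow, mul_one]

lemma measure_returnSet_inter_biUnion {W : Finset (List Bool)} {m n : ℕ} (hW : W ⊆ words m)
    (hmn : m ≤ n) :
    μ (returnSet n m ∩ ⋃ u ∈ W, cylinder u) = ENNReal.ofReal (∑ u ∈ W, weight p₁ p₂ u ^ 2) := by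
  have hdisj : (W : Set (List Bool)).PairwiseDisjoint (fun u => returnSet n m ∩ cylinder u) :=
    ((pairwiseDisjoint_cylinder m).subset (Finset.coe_subset.2 hW)).mono
      fun _ => inter_subset_right
  rw [inter_iUnion₂, measure_biUnion_finset hdisj
      fun _ _ => (measurableSet_returnSet n m).inter (measurableSet_cylinder _),
    ENNReal.ofReal_sum_of_nonneg fun u _ => sq_nonneg _]
  exact Finset.sum_congr rfl fun u hu =>
    measure_returnSet_inter_cylinder hp₁ hp₂ hsum hμ (mem_words.1 (hW hu)) hmn

lemma measure_returnSet {m n : ℕ} (hmn : m ≤ n) :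
    μ (returnSet n m) = ENNReal.ofReal ((p₁ ^ 2 + p₂ ^ 2) ^ m) := by
  rw [← measure_inter_conull (measure_compl_iUnion_cylinder hp₁ hp₂ hsum hμ m),
    measure_returnSet_inter_biUnion hp₁ hp₂ hsum hμ subset_rfl hmn]
  simp_rw [weight_pow, sum_weight]

lemma measure_returnSet_inter_lightSet_le {θ : ℝ} (hθ : 0 ≤ θ) {m n : ℕ} (hmn : m ≤ n) :
    μ (returnSet n m ∩ lightSet p₁ p₂ θ m) ≤ ENNReal.ofReal (θ ^ m) := by
  rw [lightSet, measure_returnSet_inter_biUnion hp₁ hp₂ hsum hμ (Finset.filter_subset _ _) hmn]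
  refine ENNReal.ofReal_le_ofReal ?_
  calc ∑ u ∈ (words m).filter (fun u => weight p₁ p₂ u ≤ θ ^ m), weight p₁ p₂ u ^ 2
      ≤ ∑ u ∈ (words m).filter (fun u => weight p₁ p₂ u ≤ θ ^ m), θ ^ m * weight p₁ p₂ u :=
        Finset.sum_le_sum fun u hu => by
          rw [sq]
          exact mul_le_mul_of_nonneg_right (Finset.mem_filter.1 hu).2 (weight_nonneg hp₁ hp₂ u)
    _ ≤ ∑ u ∈ words m, θ ^ m * weight p₁ p₂ u :=
        Finset.sum_le_sum_of_subset_of_nonneg (Finset.filter_subset _ _)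
          fun u _ _ => mul_nonneg (pow_nonneg hθ m) (weight_nonneg hp₁ hp₂ u)
    _ = θ ^ m := by rw [← Finset.mul_sum, sum_weight, hsum, one_pow, mul_one]

lemma measure_compl_lightSet_le (θ : ℝ) (m : ℕ) :
    μ (lightSet p₁ p₂ θ m)ᶜ ≤ ENNReal.ofReal
      (∑ u ∈ (words m).filter (fun u => θ ^ m < weight p₁ p₂ u), weight p₁ p₂ u) := by
  have hsub : (lightSet p₁ p₂ θ m)ᶜ ⊆ (⋃ w ∈ words m, cylinder w)ᶜ ∪
      ⋃ u ∈ (words m).filter (fun u => θ ^ m < weight p₁ p₂ u), cylinder u := by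
    intro x hx
    by_cases hcov : x ∈ ⋃ w ∈ words m, cylinder w
    · obtain ⟨w, hw, hxw⟩ := mem_iUnion₂.1 hcov
      have hheavy : θ ^ m < weight p₁ p₂ w := not_le.1 fun hle =>
        hx (mem_iUnion₂.2 ⟨w, Finset.mem_filter.2 ⟨hw, hle⟩, hxw⟩)
      exact Or.inr (mem_iUnion₂.2 ⟨w, Finset.mem_filter.2 ⟨hw, hheavy⟩, hxw⟩)
    · exact Or.inl hcov
  calc μ (lightSet p₁ p₂ θ m)ᶜ
      ≤ μ (⋃ w ∈ words m, cylinder w)ᶜ +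
          μ (⋃ u ∈ (words m).filter (fun u => θ ^ m < weight p₁ p₂ u), cylinder u) :=
        (measure_mono hsub).trans (measure_union_le _ _)
    _ = μ (⋃ u ∈ (words m).filter (fun u => θ ^ m < weight p₁ p₂ u), cylinder u) := by
        rw [measure_compl_iUnion_cylinder hp₁ hp₂ hsum hμ m, zero_add]
    _ ≤ ∑ u ∈ (words m).filter (fun u => θ ^ m < weight p₁ p₂ u), μ (cylinder u) :=
        measure_biUnion_finset_le _ _
    _ = _ := by
        simp_rw [hμ]
        rw [ENNReal.ofReal_sum_of_nonneg fun u _ => weight_nonneg hp₁ hp₂ u]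

theorem tsum_measure_returnSet_eq_top {α : ℝ} (hα : 0 < α)
    (hαq : -1 < α * log (p₁ ^ 2 + p₂ ^ 2)) :
    ∑' n : ℕ, μ (returnSet n ⌊α * log n⌋₊) = ∞ := by
  have hq₀ : 0 < p₁ ^ 2 + p₂ ^ 2 := by nlinarith [sq_nonneg (p₁ - p₂)]
  have hq₁ : p₁ ^ 2 + p₂ ^ 2 ≤ 1 := by nlinarith
  refine tsum_eq_top_of_eventually_ofReal_le (fun n => Real.rpow_nonneg n.cast_nonneg _)
    (Real.summable_nat_rpow.not.2 (not_lt.2 hαq.le)) ?_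
  filter_upwards [eventually_natFloor_mul_log_le hα, eventually_gt_atTop 0] with n hmn hn
  rw [measure_returnSet hp₁ hp₂ hsum hμ hmn]
  exact ENNReal.ofReal_le_ofReal (rpow_mul_log_le_pow_natFloor hq₀ hq₁ hα.le hn)

end BernoulliMeasure

theorem measure_limsup_returnSet_eq_zero {μ : Measure ℝ} [IsProbabilityMeasure μ] {p₁ p₂ : ℝ}
    (hp₁ : 0 < p₁) (hp₂ : 0 < p₂) (hsum : p₁ + p₂ = 1)
    (hμ : ∀ w, μ (cylinder w) = ENNReal.ofReal (weight p₁ p₂ w)) {α : ℝ} (hα : 0 < α)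
    (hαH : 1 < α * -(p₁ * log p₁ + p₂ * log p₂)) :
    μ (limsup (fun n : ℕ => returnSet n ⌊α * log n⌋₊) atTop) = 0 := by
  set H := -(p₁ * log p₁ + p₂ * log p₂) with hH
  set θ := exp (-(H + α⁻¹) / 2)
  have hθ₀ : 0 < θ := exp_pos _
  have hαH' : α⁻¹ < H := (inv_lt_iff_one_lt_mul₀' hα).2 hαH
  have hθ₁ : θ ≤ 1 := exp_le_one_iff.2 (by linarith [inv_pos.2 hα])
  have hαθ : α * log θ < -1 := by
    rw [log_exp]
    nlinarith [mul_inv_cancel₀ hα.ne']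
  obtain ⟨s, hs, hρ⟩ := exists_pos_rpow_add_rpow_lt hp₁ hp₂ hsum hθ₀
    (show p₁ * log p₁ + p₂ * log p₂ < log θ by rw [log_exp]; linarith)
  have hρ₁ : (p₁ ^ (1 + s) + p₂ ^ (1 + s)) / θ ^ s < 1 :=
    (div_lt_one (Real.rpow_pos_of_pos hθ₀ s)).2 hρ
  have hlight : μ (limsup (fun n : ℕ =>
      returnSet n ⌊α * log n⌋₊ ∩ lightSet p₁ p₂ θ ⌊α * log n⌋₊) atTop) = 0 := by
    refine measure_limsup_atTop_eq_zero_of_eventually_le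
      ((Real.summable_nat_rpow.2 hαθ).mul_left θ⁻¹).tsum_ofReal_ne_top ?_
    filter_upwards [eventually_natFloor_mul_log_le hα, eventually_gt_atTop 0] with n hmn hn
    exact (measure_returnSet_inter_lightSet_le hp₁.le hp₂.le hsum hμ hθ₀.le hmn).trans
      (ENNReal.ofReal_le_ofReal (pow_natFloor_le_rpow_mul_log hθ₀ hθ₁ hn))
  have hheavy : μ (limsup (fun m => (lightSet p₁ p₂ θ m)ᶜ) atTop) = 0 := by
    refine measure_limsup_atTop_eq_zero (ne_top_of_le_ne_top
      (summable_geometric_of_lt_one (by positivity) hρ₁).tsum_ofReal_ne_top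
      (ENNReal.tsum_le_tsum fun m => ?_))
    exact (measure_compl_lightSet_le hp₁.le hp₂.le hsum hμ θ m).trans
      (ENNReal.ofReal_le_ofReal (sum_weight_filter_lt_le hp₁.le hp₂.le hθ₀ hs.le m))
  exact measure_mono_null (limsup_subset_limsup_inter_union _ (tendsto_natFloor_mul_log hα))
    (measure_union_null hlight hheavy)

end CantorBernoulli

open CantorBernoulli Real in
theorem stmt_14_general (p₁ p₂ : ℝ) (hp₁ : 0 < p₁) (hp₂ : 0 < p₂) (hsum : p₁ + p₂ = 1)
    (K : Set ℝ) (hKcompact : IsCompact K) (hKne : K.Nonempty)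
    (hKself : K = (fun x : ℝ => x / 3) '' K ∪ (fun x : ℝ => (x + 2) / 3) '' K)
    (μ : Measure ℝ) [IsProbabilityMeasure μ] (hμK : μ K = 1)
    (hμself : μ = ENNReal.ofReal p₁ • μ.map (fun x : ℝ => x / 3) +
        ENNReal.ofReal p₂ • μ.map (fun x : ℝ => (x + 2) / 3))
    (T : ℝ → ℝ) (hT : ∀ x, T x = Int.fract (3 * x))
    (α : ℝ)
    (hαlow : 1 / (-(p₁ * Real.log p₁ + p₂ * Real.log p₂)) < α)
    (hαup : α < 1 / (-Real.log (p₁ ^ 2 + p₂ ^ 2)))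
    (ψ : ℕ → ℝ) (hψ : ∀ n, ψ n = (3 : ℝ) ^ (-⌊α * Real.log (n : ℝ)⌋))
    (R : ℕ → Set ℝ) (hR : ∀ n, R n = {x : ℝ | x ∈ K ∧ T^[n] x ∈ Metric.ball x (ψ n)}) :
    (∑' n, μ (R n)) = ⊤ ∧ μ (⋂ t : ℕ, ⋃ n, ⋃ (_ : t ≤ n), R n) = 0 := by
  obtain rfl : T = tripling := funext hT
  have hKc : μ Kᶜ = 0 := (prob_compl_eq_zero_iff hKcompact.measurableSet).2 hμK
  have hcyl := measure_cylinder hμself hp₁.le hp₂.le (by linarith) (measure_mono_null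
    (compl_subset_compl.2 (subset_Icc_of_eq_union_image hKcompact hKne hKself)) hKc)
  have hH : 0 < -(p₁ * log p₁ + p₂ * log p₂) := by
    nlinarith [log_neg hp₁ (by linarith), log_neg hp₂ (by linarith)]
  have hα : 0 < α := (one_div_pos.2 hH).trans hαlow
  have hlogq : 0 < -log (p₁ ^ 2 + p₂ ^ 2) := neg_pos.2 (log_neg (by positivity) (by nlinarith))
  have hαq : -1 < α * log (p₁ ^ 2 + p₂ ^ 2) := by linarith [(lt_div_iff₀ hlogq).1 hαup]
  have hRn : ∀ n : ℕ, R n = returnSet n ⌊α * log n⌋₊ ∩ K := by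
    intro n
    rw [hR, hψ, ← Int.natCast_floor_eq_floor (mul_nonneg hα.le (log_natCast_nonneg n)),
      zpow_neg, zpow_natCast, ← inv_pow]
    ext x
    exact and_comm
  refine ⟨?_, ?_⟩
  · simp_rw [hRn, measure_inter_conull hKc]
    exact tsum_measure_returnSet_eq_top hp₁.le hp₂.le hsum hcyl hα hαq
  · refine measure_mono_null ?_
      (measure_limsup_returnSet_eq_zero hp₁ hp₂ hsum hcyl hα ((div_lt_iff₀ hH).1 hαlow))
    rw [limsup_eq_iInf_iSup_of_nat]
    exact iInter_mono fun t => iUnion₂_mono fun n _ => (hRn n).trans_subset inter_subset_left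

/-- Example ABB: for a non-uniform Bernoulli measure on the middle-third Cantor set, the
expected zero-one criterion for recurrence fails: the measure sum diverges yet the recurrence
set is null. Here `K` is the attractor of the Cantor IFS and `μ` the associated
self-similar (Bernoulli) measure with weights `(p₁, p₂)`. -/
theorem stmt_14 (p₁ p₂ : ℝ) (hp₁ : 0 < p₁) (hp₂ : 0 < p₂) (hsum : p₁ + p₂ = 1) (hne : p₁ ≠ p₂)
    (K : Set ℝ) (hKcompact : IsCompact K) (hKne : K.Nonempty)
    (hKself : K = (fun x : ℝ => x / 3) '' K ∪ (fun x : ℝ => (x + 2) / 3) '' K)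
    (μ : Measure ℝ) [IsProbabilityMeasure μ] (hμK : μ K = 1)
    (hμself : μ = ENNReal.ofReal p₁ • μ.map (fun x : ℝ => x / 3) +
        ENNReal.ofReal p₂ • μ.map (fun x : ℝ => (x + 2) / 3))
    (T : ℝ → ℝ) (hT : ∀ x, T x = Int.fract (3 * x))
    (α : ℝ)
    (hαlow : 1 / (-(p₁ * Real.log p₁ + p₂ * Real.log p₂)) < α)
    (hαup : α < 1 / (-Real.log (p₁ ^ 2 + p₂ ^ 2)))
    (ψ : ℕ → ℝ) (hψ : ∀ n, ψ n = (3 : ℝ) ^ (-⌊α * Real.log (n : ℝ)⌋))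
    (R : ℕ → Set ℝ) (hR : ∀ n, R n = {x : ℝ | x ∈ K ∧ T^[n] x ∈ Metric.ball x (ψ n)}) :
    (∑' n, μ (R n)) = ⊤ ∧ μ (⋂ t : ℕ, ⋃ n, ⋃ (_ : t ≤ n), R n) = 0 :=
  stmt_14_general p₁ p₂ hp₁ hp₂ hsum K hKcompact hKne hKself μ hμK hμself T hT α hαlow hαup ψ hψ R
    hR
end
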